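/- arXiv:1507.01337 — 8 statements merged into one kernel-verified Lean document; each statement's English description precedes it below -/
import Mathlib

section
/- Let f be a polynomial in n variables with f(0)=0, and write f = f_2 + f_3 + ... as a sum of homogeneous components (so the components of degree 0 and 1 vanish). If the quadratic form f_2 is positive definite, then f is a sum of squares of formal power series in R[[x_1,...,x_n]]. -/
/-!
Factor the Gram matrix of the positive definite form `f₂` as `Bᵀ B` with `B` invertible, so that
`f₂ = ∑ ℓᵢ²` for the linear forms `ℓ = B x`, which generate the maximal ideal `𝔪` of `ℝ[[x]]`.
Then `f ≡ ∑ ℓᵢ² mod 𝔪³`, and Newton's method improves such a congruence: if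
`f - ∑ tᵢ² ∈ 𝔪^(m+3)` with `tᵢ ≡ ℓᵢ mod 𝔪²`, write the error as `∑ cᵢ ℓᵢ` with `cᵢ ∈ 𝔪^(m+2)`;
then `f - ∑ (tᵢ + cᵢ/2)² ∈ 𝔪^(m+4)`. The corrected `tᵢ` form `𝔪`-adic Cauchy sequences, and since
`ℝ[[x]]` is `𝔪`-adically complete their limits `gᵢ` satisfy `f = ∑ gᵢ²`.
-/

open MvPolynomial

theorem exists_seq_of_forall_exists_succ {α : Type*} {P : ℕ → α → Prop} {R : ℕ → α → α → Prop}
    {a : α} (ha : P 0 a) (step : ∀ m x, P m x → ∃ y, P (m + 1) y ∧ R m x y) :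
    ∃ s : ℕ → α, ∀ m, P m (s m) ∧ R m (s m) (s (m + 1)) := by
  choose next hnextP hnextR using step
  let s : (m : ℕ) → {x // P m x} := fun m =>
    Nat.rec ⟨a, ha⟩ (fun m x => ⟨next m x x.2, hnextP m x x.2⟩) m
  exact ⟨fun m => (s m).1, fun m => ⟨(s m).2, hnextR m _ (s m).2⟩⟩

namespace Ideal

open Finset

variable {A ι : Type*} [CommRing A] {I : Ideal A}

lemma exists_sum_mul_eq_of_mem_mul_span [Fintype ι] {J : Ideal A} {ℓ : ι → A} {x : A}
    (hx : x ∈ J * span (Set.range ℓ)) : ∃ c : ι → A, (∀ i, c i ∈ J) ∧ ∑ i, c i * ℓ i = x := by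
  obtain ⟨c, hc, rfl⟩ := (Submodule.mem_ideal_smul_span_iff_exists_sum J ℓ x).1 hx
  exact ⟨c, hc, by simp [Finsupp.sum_fintype]⟩

lemma sub_mem_pow_of_succ_sub_mem_pow {a : ℕ → A} (ha : ∀ m, a (m + 1) - a m ∈ I ^ m) {m k : ℕ}
    (hmk : m ≤ k) : a k - a m ∈ I ^ m := by
  induction k, hmk using Nat.le_induction with
  | base => simp
  | succ k hmk ih =>
    rw [← sub_add_sub_cancel]
    exact add_mem (pow_le_pow_right hmk (ha k)) ih

lemma exists_sub_mem_pow_of_succ_sub_mem_pow [IsPrecomplete I A] {a : ℕ → A}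
    (ha : ∀ m, a (m + 1) - a m ∈ I ^ m) : ∃ L, ∀ m, a m - L ∈ I ^ m := by
  obtain ⟨L, hL⟩ := IsPrecomplete.prec (I := I) inferInstance (f := a) fun hmk => by
    rw [SModEq.sub_mem, smul_eq_mul, mul_top, ← neg_mem_iff, neg_sub]
    exact sub_mem_pow_of_succ_sub_mem_pow ha hmk
  exact ⟨L, fun m => by simpa [SModEq.sub_mem] using hL m⟩

lemma eq_zero_of_forall_mem_pow [IsHausdorff I A] {x : A} (hx : ∀ m, x ∈ I ^ m) : x = 0 :=
  IsHausdorff.haus (I := I) inferInstance x fun m => by simpa [SModEq.zero] using hx m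

theorem exists_sub_sum_add_mul_self_mem_pow_succ [Fintype ι] {ℓ : ι → A} (h2 : IsUnit (2 : A))
    (hℓ : I ≤ span (Set.range ℓ)) {F : A} {t : ι → A} {m : ℕ} (ht : ∀ i, t i - ℓ i ∈ I ^ 2)
    (hF : F - ∑ i, t i * t i ∈ I ^ (m + 3)) :
    ∃ c : ι → A, (∀ i, c i ∈ I ^ (m + 2)) ∧
      F - ∑ i, (t i + c i) * (t i + c i) ∈ I ^ (m + 4) := by
  obtain ⟨h, h2h⟩ := h2.exists_right_inv
  have hF' : F - ∑ i, t i * t i ∈ I ^ (m + 2) * span (Set.range ℓ) :=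
    mul_mono_right hℓ (pow_succ I (m + 2) ▸ hF)
  obtain ⟨c, hc, hcF⟩ := exists_sum_mul_eq_of_mem_mul_span hF'
  refine ⟨fun i => h * c i, fun i => mul_mem_left _ _ (hc i), ?_⟩
  have herror : F - ∑ i, (t i + h * c i) * (t i + h * c i) =
      -∑ i, ((t i - ℓ i) * c i + h ^ 2 * (c i * c i)) := by
    have hsq : ∑ i, (t i + h * c i) * (t i + h * c i) = ∑ i, t i * t i + ∑ i, c i * ℓ i +
        ∑ i, ((t i - ℓ i) * c i + h ^ 2 * (c i * c i)) := by
      rw [← sum_add_distrib, ← sum_add_distrib]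
      exact sum_congr rfl fun i _ => by linear_combination (t i * c i) * h2h
    rw [hsq, hcF]
    ring
  rw [herror]
  refine neg_mem (sum_mem _ fun i _ => add_mem ?_ (mul_mem_left _ _ ?_))
  · rw [show m + 4 = 2 + (m + 2) by omega, pow_add]
    exact mul_mem_mul (ht i) (hc i)
  · exact pow_le_pow_right (by omega) (pow_add I (m + 2) (m + 2) ▸ mul_mem_mul (hc i) (hc i))

theorem exists_eq_sum_mul_self_of_sub_mem_pow_three [IsAdicComplete I A] [Fintype ι]
    {ℓ : ι → A} (h2 : IsUnit (2 : A)) (hℓ : I ≤ span (Set.range ℓ)) {F : A}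
    (hF : F - ∑ i, ℓ i * ℓ i ∈ I ^ 3) : ∃ g : ι → A, F = ∑ i, g i * g i := by
  obtain ⟨t, ht⟩ := exists_seq_of_forall_exists_succ
    (P := fun m t => (∀ i, t i - ℓ i ∈ I ^ 2) ∧ F - ∑ i, t i * t i ∈ I ^ (m + 3))
    (R := fun m t t' => ∀ i, t' i - t i ∈ I ^ m) (a := ℓ) ⟨fun i => by simp, hF⟩
    fun m t ⟨htℓ, htF⟩ => by
      obtain ⟨c, hc, hF'⟩ := exists_sub_sum_add_mul_self_mem_pow_succ h2 hℓ htℓ htF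
      refine ⟨t + c, ⟨fun i => ?_, hF'⟩, fun i => ?_⟩
      · simpa [add_sub_right_comm] using add_mem (htℓ i) (pow_le_pow_right (by omega) (hc i))
      · simpa using pow_le_pow_right (by omega) (hc i)
  choose g hg using fun i =>
    exists_sub_mem_pow_of_succ_sub_mem_pow (I := I) (a := fun m => t m i) fun m => (ht m).2 i
  refine ⟨g, sub_eq_zero.1 (eq_zero_of_forall_mem_pow (I := I) fun m => ?_)⟩
  have hdiff : F - ∑ i, g i * g i =
      (F - ∑ i, t m i * t m i) + ∑ i, (t m i - g i) * (t m i + g i) := by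
    rw [show ∑ i, (t m i - g i) * (t m i + g i) = ∑ i, t m i * t m i - ∑ i, g i * g i by
      rw [← sum_sub_distrib]; exact sum_congr rfl fun i _ => by ring]
    ring
  rw [hdiff]
  exact add_mem (pow_le_pow_right (by omega) (ht m).1.2)
    (sum_mem _ fun i _ => mul_mem_right _ _ (hg i m))

end Ideal

namespace MvPolynomial

open Matrix

section QuadraticForm

variable {σ K : Type*} [Fintype σ]

theorem IsHomogeneous.exists_isSymm_eval_eq_dotProduct_mulVec [Field K] [NeZero (2 : K)]
    {q : MvPolynomial σ K} (hq : q.IsHomogeneous 2) :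
    ∃ M : Matrix σ σ K, M.IsSymm ∧ ∀ x, eval x q = x ⬝ᵥ M *ᵥ x := by
  have hlin : ∀ i, pderiv i q ∈ Submodule.span K (Set.range X) := fun i => by
    rw [← homogeneousSubmodule_one_eq_span_X, mem_homogeneousSubmodule]
    exact hq.pderiv
  choose A hA using fun i => (Submodule.mem_span_range_iff_exists_fun K).1 (hlin i)
  set N : Matrix σ σ K := of A
  -- Euler's identity `∑ X i * ∂ᵢ q = 2 q`, with `∂ᵢ q = ∑ N i j X j`
  have hN : ∀ x, x ⬝ᵥ N *ᵥ x = 2 * eval x q := fun x => by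
    simpa [← hA, dotProduct, mulVec, N] using congrArg (eval x) hq.sum_X_mul_pderiv
  refine ⟨(4 : K)⁻¹ • (N + Nᵀ), (isSymm_add_transpose_self N).smul _, fun x => ?_⟩
  have h4 : (4 : K) ≠ 0 := by
    rw [show (4 : K) = 2 * 2 by norm_num]
    exact mul_ne_zero two_ne_zero two_ne_zero
  rw [smul_mulVec, dotProduct_smul, add_mulVec, dotProduct_add, dotProduct_mulVec x Nᵀ,
    vecMul_transpose, dotProduct_comm (N *ᵥ x), hN, smul_eq_mul]
  field_simp
  ring

open scoped MatrixOrder in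
theorem IsHomogeneous.exists_sum_mul_self_eq_of_pos [DecidableEq σ] {q : MvPolynomial σ ℝ}
    (hq : q.IsHomogeneous 2) (hpos : ∀ x ≠ 0, 0 < eval x q) :
    ∃ ℓ : σ → MvPolynomial σ ℝ, idealOfVars σ ℝ ≤ Ideal.span (Set.range ℓ) ∧
      ∑ i, ℓ i * ℓ i = q := by
  obtain ⟨M, hMsymm, hM⟩ := hq.exists_isSymm_eval_eq_dotProduct_mulVec
  have hMpos : M.PosDef := by
    refine .of_dotProduct_mulVec_pos ?_ fun x hx => by simpa [← hM] using hpos x hx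
    rw [IsHermitian, conjTranspose_eq_transpose_of_trivial, hMsymm.eq]
  obtain ⟨B, hB, rfl⟩ :=
    CStarAlgebra.isStrictlyPositive_iff_eq_star_mul_self.mp hMpos.isStrictlyPositive
  set ℓ : σ → MvPolynomial σ ℝ := fun i => ∑ j, C (B i j) * X j
  have hℓ : ∀ x i, eval x (ℓ i) = (B *ᵥ x) i := fun x i => by simp [ℓ, mulVec, dotProduct]
  refine ⟨ℓ, Ideal.span_le.2 (Set.range_subset_iff.2 fun j => ?_),
    MvPolynomial.funext fun x => ?_⟩
  · have hX : X j = ∑ i, C (B⁻¹ j i) * ℓ i := MvPolynomial.funext fun x => by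
      simp only [eval_X, map_sum, map_mul, eval_C, hℓ]
      calc x j = (B⁻¹ *ᵥ (B *ᵥ x)) j := by
            rw [mulVec_mulVec, nonsing_inv_mul _ ((isUnit_iff_isUnit_det B).1 hB), one_mulVec]
        _ = _ := by simp [mulVec, dotProduct]
    rw [hX]
    exact Ideal.sum_mem _ fun i _ => Ideal.mul_mem_left _ _ (Ideal.subset_span ⟨i, rfl⟩)
  · rw [hM, ← mulVec_mulVec, dotProduct_mulVec, star_eq_conjTranspose,
      conjTranspose_eq_transpose_of_trivial, vecMul_transpose]
    simp [hℓ, dotProduct]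

end QuadraticForm

variable {σ R : Type*} [CommRing R]

theorem sub_homogeneousComponent_mem_pow_idealOfVars {p : MvPolynomial σ R} {k : ℕ}
    (hp : ∀ d < k, homogeneousComponent d p = 0) :
    p - homogeneousComponent k p ∈ idealOfVars σ R ^ (k + 1) := by
  rw [mem_pow_idealOfVars_iff']
  intro e he
  rw [coeff_sub, coeff_homogeneousComponent]
  split_ifs with hek
  · exact sub_self _
  · have := congrArg (coeff e) (hp e.degree (by omega))
    rw [coeff_homogeneousComponent, if_pos rfl, coeff_zero] at this
    rw [this, sub_zero]

theorem map_idealOfVars_coeToMvPowerSeries :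
    Ideal.map coeToMvPowerSeries.ringHom (idealOfVars σ R) =
      Ideal.span (Set.range (MvPowerSeries.X : σ → MvPowerSeries σ R)) := by
  simp_rw [Ideal.map_span, ← Set.range_comp]
  congr 2; ext1
  simp

end MvPolynomial

theorem sos_powerSeries_of_posdef_quadratic_part_general (n : ℕ) (f : MvPolynomial (Fin n) ℝ)
    (h0 : MvPolynomial.homogeneousComponent 0 f = 0)
    (h1 : MvPolynomial.homogeneousComponent 1 f = 0)
    (hpd : ∀ x : Fin n → ℝ, x ≠ 0 →
      0 < MvPolynomial.eval x (MvPolynomial.homogeneousComponent 2 f)) :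
    IsSumSq (f : MvPowerSeries (Fin n) ℝ) := by
  obtain ⟨ℓ, hspan, hsq⟩ :=
    (homogeneousComponent_isHomogeneous 2 f).exists_sum_mul_self_eq_of_pos hpd
  have hcubic : f - ∑ i, ℓ i * ℓ i ∈ idealOfVars (Fin n) ℝ ^ 3 :=
    hsq ▸ sub_homogeneousComponent_mem_pow_idealOfVars fun d hd => by
      interval_cases d <;> assumption
  set φ := coeToMvPowerSeries.ringHom (σ := Fin n) (R := ℝ)
  have hspan' : Ideal.span (Set.range MvPowerSeries.X) ≤ Ideal.span (Set.range (φ ∘ ℓ)) := by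
    rw [← map_idealOfVars_coeToMvPowerSeries, Set.range_comp, ← Ideal.map_span]
    exact Ideal.map_mono hspan
  have hcubic' : φ f - ∑ i, φ (ℓ i) * φ (ℓ i) ∈ Ideal.span (Set.range MvPowerSeries.X) ^ 3 := by
    simpa [← map_idealOfVars_coeToMvPowerSeries, ← Ideal.map_pow] using
      Ideal.mem_map_of_mem φ hcubic
  have h2 : IsUnit (2 : MvPowerSeries (Fin n) ℝ) := by
    rw [MvPowerSeries.isUnit_iff_constantCoeff, map_ofNat]
    norm_num
  obtain ⟨g, hg⟩ := Ideal.exists_eq_sum_mul_self_of_sub_mem_pow_three h2 hspan' hcubic'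
  rw [show (f : MvPowerSeries (Fin n) ℝ) = φ f from rfl, hg]
  exact IsSumSq.sum_mul_self _ _

/-- If `f(0) = 0`, the degree-0 and degree-1 homogeneous components of `f` vanish and the
quadratic part `f₂` is positive definite, then `f` is a sum of squares of formal power series. -/
theorem sos_powerSeries_of_posdef_quadratic_part (n : ℕ) (f : MvPolynomial (Fin n) ℝ)
    (hf0 : MvPolynomial.eval (0 : Fin n → ℝ) f = 0)
    (h0 : MvPolynomial.homogeneousComponent 0 f = 0)
    (h1 : MvPolynomial.homogeneousComponent 1 f = 0)
    (hpd : ∀ x : Fin n → ℝ, x ≠ 0 →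
      0 < MvPolynomial.eval x (MvPolynomial.homogeneousComponent 2 f)) :
    IsSumSq (f : MvPowerSeries (Fin n) ℝ) :=
  sos_powerSeries_of_posdef_quadratic_part_general n f h0 h1 hpd
end

section
/- Let f be a nonzero polynomial in R[x_1,...,x_n] that is a sum of squares of polynomials, let A be a nonzero vector of nonnegative integers, and let v = min over exponents α in the support of f of the dot product A·α. Then v is even, and the A-lowest part f_v of f (the sum of terms f_α x^α with A·α = v) is itself a sum of squares of polynomials. -/
open MvPolynomial

/-- The `A`-weight of an exponent vector. -/
def wtA {n : ℕ} (A : Fin n → ℕ) (α : Fin n →₀ ℕ) : ℕ := ∑ i, A i * α i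

/-- The part of `f` consisting of terms of `A`-weight exactly `v`. -/
noncomputable def weightPart {n : ℕ} (A : Fin n → ℕ) (v : ℕ) (f : MvPolynomial (Fin n) ℝ) :
    MvPolynomial (Fin n) ℝ :=
  ∑ α ∈ f.support.filter (fun α => wtA A α = v), monomial α (coeff α f)

/-!
Write `f = ∑ gᵢ²` and let `μ` be the least weight of a monomial occurring in some `gᵢ`. Every
monomial of `f` then has weight at least `2μ`, and the weight-`2μ` part of `f` is `∑ (gᵢ)_μ²`,
where `(gᵢ)_μ` is the weight-`μ` part of `gᵢ`. Some `(gᵢ)_μ` is nonzero, and since real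
polynomials form a formally real ring (evaluate at points), this sum of squares does not vanish.
Hence the lowest weight of `f` is `v = 2μ` and `f_v = ∑ (gᵢ)_μ²`.
-/

open Finsupp

namespace MvPolynomial

section LowerBound

variable {σ R M : Type*} [CommSemiring R] [AddCommMonoid M] [PartialOrder M] {w : σ → M}
  {a b : M} {p q : MvPolynomial σ R}

theorem le_weight_of_mem_support_mul [IsOrderedAddMonoid M]
    (hp : ∀ d ∈ p.support, a ≤ weight w d) (hq : ∀ d ∈ q.support, b ≤ weight w d) :
    ∀ d ∈ (p * q).support, a + b ≤ weight w d := by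
  classical
  intro d hd
  obtain ⟨x, hx, y, hy, rfl⟩ := Finset.mem_add.mp (support_mul p q hd)
  rw [map_add]
  exact add_le_add (hp x hx) (hq y hy)

theorem weightedHomogeneousComponent_mul_of_le [IsOrderedCancelAddMonoid M]
    (hp : ∀ d ∈ p.support, a ≤ weight w d) (hq : ∀ d ∈ q.support, b ≤ weight w d) :
    weightedHomogeneousComponent w (a + b) (p * q) =
      weightedHomogeneousComponent w a p * weightedHomogeneousComponent w b q := by
  classical
  ext d
  rw [coeff_weightedHomogeneousComponent]
  split_ifs with hd
  · rw [coeff_mul, coeff_mul]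
    refine Finset.sum_congr rfl fun x hx => ?_
    obtain ⟨x, y⟩ := x
    rw [coeff_weightedHomogeneousComponent, coeff_weightedHomogeneousComponent]
    by_cases hpx : coeff x p = 0
    · simp [hpx]
    by_cases hqy : coeff y q = 0
    · simp [hqy]
    have hxy : a + b = weight w x + weight w y := by
      rw [← map_add, Finset.HasAntidiagonal.mem_antidiagonal.mp hx, hd]
    obtain ⟨hxa, hyb⟩ := (add_eq_add_iff_eq_and_eq (hp x (mem_support_iff.mpr hpx))
      (hq y (mem_support_iff.mpr hqy))).mp hxy
    rw [if_pos hxa.symm, if_pos hyb.symm]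
  · exact ((weightedHomogeneousComponent_isWeightedHomogeneous a p).mul
      (weightedHomogeneousComponent_isWeightedHomogeneous b q)).coeff_eq_zero d hd |>.symm

theorem weightedHomogeneousComponent_multiset_sum_mul_self [IsOrderedCancelAddMonoid M]
    {m : Multiset (MvPolynomial σ R)} (hm : ∀ p ∈ m, ∀ d ∈ p.support, a ≤ weight w d) :
    weightedHomogeneousComponent w (a + a) (m.map fun p => p * p).sum =
      ((m.map (weightedHomogeneousComponent w a)).map fun p => p * p).sum := by
  rw [map_multiset_sum, Multiset.map_map, Multiset.map_map]
  exact congrArg _ (Multiset.map_congr rfl fun p hp =>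
    weightedHomogeneousComponent_mul_of_le (hm p hp) (hm p hp))

theorem le_weight_of_mem_support_multiset_sum {m : Multiset (MvPolynomial σ R)}
    (hm : ∀ p ∈ m, ∀ d ∈ p.support, a ≤ weight w d) : ∀ d ∈ m.sum.support, a ≤ weight w d := by
  classical
  induction m using Multiset.induction with
  | empty => simp
  | cons p m ih =>
    intro d hd
    rw [Multiset.sum_cons] at hd
    rcases Finset.mem_union.mp (support_add hd) with hd | hd
    · exact hm p (Multiset.mem_cons_self p m) d hd
    · exact ih (fun q hq => hm q (Multiset.mem_cons_of_mem hq)) d hd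

theorem isLeast_weight_support (hp : ∀ d ∈ p.support, a ≤ weight w d)
    (ha : weightedHomogeneousComponent w a p ≠ 0) :
    IsLeast {x | ∃ d ∈ p.support, weight w d = x} a := by
  classical
  obtain ⟨d, hd⟩ := ne_zero_iff.mp ha
  rw [coeff_weightedHomogeneousComponent] at hd
  split_ifs at hd with hda
  · exact ⟨⟨d, mem_support_iff.mpr hd, hda⟩, fun x ⟨d, hd, hdx⟩ => hdx ▸ hp d hd⟩
  · exact absurd rfl hd

end LowerBound

end MvPolynomial

theorem IsSumSq.map {R S F : Type*} [NonAssocSemiring R] [NonAssocSemiring S] [FunLike F R S]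
    [RingHomClass F R S] (φ : F) {s : R} (hs : IsSumSq s) : IsSumSq (φ s) := by
  induction hs with
  | zero => simp [IsSumSq.zero]
  | sq_add a _ ih => simpa using IsSumSq.sq_add (φ a) ih

theorem IsSumSq.exists_multiset {R : Type*} [AddCommMonoid R] [Mul R] {s : R}
    (h : IsSumSq s) : ∃ m : Multiset R, s = (m.map fun g => g * g).sum := by
  induction h with
  | zero => exact ⟨0, by simp⟩
  | sq_add a _ ih =>
    obtain ⟨m, rfl⟩ := ih
    exact ⟨a ::ₘ m, by simp⟩

theorem IsSumSq.multiset_sum_map_mul_self {R : Type*} [AddCommMonoid R] [Mul R] (m : Multiset R) :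
    IsSumSq (m.map fun g => g * g).sum :=
  AddSubmonoid.multiset_sum_mem (AddSubmonoid.sumSq R) _ (by simp)

theorem IsFormallyReal.eq_zero_of_multiset_sum_mul_self_eq_zero {R : Type*} [CommRing R]
    [IsFormallyReal R] {m : Multiset R} (hm : (m.map fun g => g * g).sum = 0) {a : R}
    (ha : a ∈ m) : a = 0 := by
  obtain ⟨t, rfl⟩ := Multiset.exists_cons_of_mem ha
  rw [Multiset.map_cons, Multiset.sum_cons] at hm
  have hsq : a * a = 0 :=
    eq_zero_of_add_right (.mul_self a) (.multiset_sum_map_mul_self t) hm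
  exact IsNilpotent.eq_zero ⟨2, by rw [pow_two, hsq]⟩

instance MvPolynomial.instIsFormallyReal {σ R : Type*} [CommRing R] [IsDomain R] [Infinite R]
    [IsFormallyReal R] :
    IsFormallyReal (MvPolynomial σ R) :=
  .of_eq_zero_of_eq_zero_of_mul_self_add fun {s a} hs h => by
    refine MvPolynomial.funext fun x => ?_
    have hx : eval x a * eval x a + eval x s = 0 := by simpa using congrArg (eval x) h
    rw [map_zero]
    exact mul_self_eq_zero.mp <|
      IsFormallyReal.eq_zero_of_add_right (.mul_self _) (hs.map (eval x)) hx

namespace IsSumSq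

variable {σ R M : Type*} [CommRing R] [IsDomain R] [Infinite R] [IsFormallyReal R]
  [AddCommMonoid M] [LinearOrder M] [IsOrderedCancelAddMonoid M]

theorem exists_isLeast_weight_support {f : MvPolynomial σ R} (hf : IsSumSq f) (hf0 : f ≠ 0)
    (w : σ → M) :
    ∃ μ : M, IsLeast {x | ∃ d ∈ f.support, weight w d = x} (μ + μ) ∧
      IsSumSq (weightedHomogeneousComponent w (μ + μ) f) := by
  classical
  obtain ⟨m, rfl⟩ := hf.exists_multiset
  set W : Finset M := (m.toFinset.biUnion support).image (weight w)
  have hW : W.Nonempty := by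
    obtain ⟨g, hg, hg0⟩ : ∃ g ∈ m, g ≠ 0 := by
      by_contra! h
      exact hf0 (Multiset.sum_eq_zero fun x hx => by
        obtain ⟨g, hg, rfl⟩ := Multiset.mem_map.mp hx
        simp [h g hg])
    obtain ⟨d, hd⟩ := ne_zero_iff.mp hg0
    exact ⟨weight w d, by simpa [W] using ⟨d, ⟨g, hg, hd⟩, rfl⟩⟩
  set μ := W.min' hW
  have hμ : ∀ g ∈ m, ∀ d ∈ g.support, μ ≤ weight w d := fun g hg d hd =>
    W.min'_le _ (by simpa [W] using ⟨d, ⟨g, hg, MvPolynomial.mem_support_iff.mp hd⟩, rfl⟩)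
  obtain ⟨d₀, ⟨g₀, hg₀, hd₀⟩, hμd₀⟩ : ∃ d, (∃ g ∈ m, coeff d g ≠ 0) ∧ weight w d = μ := by
    simpa [W] using W.min'_mem hW
  have hcomp := weightedHomogeneousComponent_multiset_sum_mul_self hμ
  have hg₀μ : weightedHomogeneousComponent w μ g₀ ≠ 0 := fun h => by
    simpa [coeff_weightedHomogeneousComponent, hμd₀, hd₀] using congrArg (coeff d₀) h
  refine ⟨μ, isLeast_weight_support ?_ ?_, hcomp ▸ multiset_sum_map_mul_self _⟩
  · exact le_weight_of_mem_support_multiset_sum fun p hp => by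
      obtain ⟨g, hg, rfl⟩ := Multiset.mem_map.mp hp
      exact le_weight_of_mem_support_mul (hμ g hg) (hμ g hg)
  · rw [hcomp]
    exact fun h => hg₀μ (IsFormallyReal.eq_zero_of_multiset_sum_mul_self_eq_zero h
      (Multiset.mem_map_of_mem _ hg₀))

end IsSumSq

theorem wtA_eq_weight {n : ℕ} (A : Fin n → ℕ) : wtA A = weight A := by
  ext α
  simp [wtA, weight_apply, Finsupp.sum_fintype, mul_comm]

theorem weightPart_eq_weightedHomogeneousComponent {n : ℕ} (A : Fin n → ℕ) (v : ℕ)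
    (f : MvPolynomial (Fin n) ℝ) : weightPart A v f = weightedHomogeneousComponent A v f := by
  rw [weightPart, weightedHomogeneousComponent_apply, wtA_eq_weight]

theorem lowest_part_of_sos_general (n : ℕ) (f : MvPolynomial (Fin n) ℝ)
    (hsos : IsSumSq f) (A : Fin n → ℕ) (v : ℕ)
    (hv : IsLeast {w | ∃ α ∈ f.support, wtA A α = w} v) :
    Even v ∧ IsSumSq (weightPart A v f) := by
  have hf : f ≠ 0 := by
    rintro rfl
    simpa using hv.1
  obtain ⟨μ, hμ, hsq⟩ := hsos.exists_isLeast_weight_support hf A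
  rw [wtA_eq_weight] at hv
  obtain rfl := hv.unique hμ
  exact ⟨⟨μ, rfl⟩, weightPart_eq_weightedHomogeneousComponent A _ f ▸ hsq⟩

/-- If a nonzero polynomial `f` is a sum of squares, `A` is a nonzero nonnegative integer weight
vector and `v` is the minimal `A`-weight of an exponent in the support of `f`, then `v` is even
and the `A`-lowest part of `f` is a sum of squares of polynomials. -/
theorem lowest_part_of_sos (n : ℕ) (f : MvPolynomial (Fin n) ℝ) (hf : f ≠ 0)
    (hsos : IsSumSq f) (A : Fin n → ℕ) (hA : A ≠ 0) (v : ℕ)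
    (hv : IsLeast {w | ∃ α ∈ f.support, wtA A α = w} v) :
    Even v ∧ IsSumSq (weightPart A v f) :=
  lowest_part_of_sos_general n f hsos A v hv
end

section
/- Let f be a nonnegative polynomial on R^n with f(0) = 0. Then for every vertex α of the Newton diagram of f, the exponent α has all coordinates even and the coefficient f_α is strictly positive. -/
/-!
A vertex `α` of the Newton polyhedron lies in the support of `f` (the set `Δ(f)` is closed
upwards), and a linear weight `u` attains its minimum over the support strictly at `α`.
Along the curve `x = σ · exp (s u)`, after rescaling by `exp (-s ⟨u, α⟩)`, the term
`f_α σ^α` dominates as `s → -∞`, so nonnegativity of `f` gives `f_α σ^α ≥ 0` for every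
`σ ∈ ℝⁿ`. Taking `σ = 1` and then `σ` with a single coordinate `-1` shows `f_α > 0` and that
every coordinate of `α` is even.
-/

open MvPolynomial

noncomputable section
attribute [local instance] Classical.propDecidable

/-- The real point associated to an exponent vector. -/
def expPt {n : ℕ} (α : Fin n →₀ ℕ) : Fin n → ℝ := fun i => (α i : ℝ)

/-- `Δ(f) = ⋃_{α ∈ supp f} (α + ℝ₊ⁿ)`. -/
def DeltaSet {n : ℕ} (f : MvPolynomial (Fin n) ℝ) : Set (Fin n → ℝ) :=
  {x | ∃ α ∈ f.support, ∀ i, (α i : ℝ) ≤ x i}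

/-- The Newton polyhedron `conv Δ(f)`. -/
def NewtonPolyhedron {n : ℕ} (f : MvPolynomial (Fin n) ℝ) : Set (Fin n → ℝ) :=
  convexHull ℝ (DeltaSet f)

/-- `F` is a (nonempty) face of `P`, cut out by a supporting hyperplane. -/
def IsFaceOf {n : ℕ} (P F : Set (Fin n → ℝ)) : Prop :=
  F.Nonempty ∧ ∃ (A : Fin n → ℝ) (c : ℝ), A ≠ 0 ∧ (∀ x ∈ P, c ≤ ∑ i, A i * x i) ∧
    F = {x ∈ P | ∑ i, A i * x i = c}

/-- A compact face of `P`. -/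
def IsCompactFaceOf {n : ℕ} (P F : Set (Fin n → ℝ)) : Prop := IsFaceOf P F ∧ IsCompact F

/-- The Newton diagram: the union of the compact faces of the Newton polyhedron. -/
def NewtonDiagram {n : ℕ} (f : MvPolynomial (Fin n) ℝ) : Set (Fin n → ℝ) :=
  ⋃ F ∈ {F | IsCompactFaceOf (NewtonPolyhedron f) F}, F

/-- A maximal (compact) face of the Newton diagram of `f`. -/
def IsMaximalFace {n : ℕ} (f : MvPolynomial (Fin n) ℝ) (γ : Set (Fin n → ℝ)) : Prop :=
  IsCompactFaceOf (NewtonPolyhedron f) γ ∧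
    ∀ γ', IsCompactFaceOf (NewtonPolyhedron f) γ' → γ ⊆ γ' → γ' = γ

/-- `f_γ`: the sum of the terms of `f` whose exponents lie in `γ`. -/
def facePart {n : ℕ} (f : MvPolynomial (Fin n) ℝ) (γ : Set (Fin n → ℝ)) :
    MvPolynomial (Fin n) ℝ :=
  ∑ α ∈ f.support.filter (fun α => expPt α ∈ γ), monomial α (coeff α f)

/-- Sums of squares of polynomials supported in `(1/2)γ`, i.e. whose squared factors only
involve exponents `α` with `2α ∈ γ`. -/
def sosHalfSupported {n : ℕ} (γ : Set (Fin n → ℝ)) : Set (MvPolynomial (Fin n) ℝ) :=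
  {p | ∃ l : Multiset (MvPolynomial (Fin n) ℝ),
    (∀ q ∈ l, ∀ α ∈ q.support, (2 : ℝ) • expPt α ∈ γ) ∧ p = (l.map (· ^ 2)).sum}

/-- Algebraic characterization of membership in the relative interior of a convex set `C`:
`x ∈ C` and every segment from a point of `C` to `x` can be prolonged beyond `x` within `C`. -/
def MemRint {V : Type*} [AddCommGroup V] [Module ℝ V] (C : Set V) (x : V) : Prop :=
  x ∈ C ∧ ∀ y ∈ C, ∃ μ : ℝ, 1 < μ ∧ μ • x + (1 - μ) • y ∈ C

/-- `Δ_E(f)`: union of `α + ℝ₊ⁿ` over the even exponents `α` in the support of `f`. -/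
def DeltaESet {n : ℕ} (f : MvPolynomial (Fin n) ℝ) : Set (Fin n → ℝ) :=
  {x | ∃ α ∈ f.support, (∀ i, Even (α i)) ∧ ∀ i, (α i : ℝ) ≤ x i}

/-- `α ∈ bconv E`: `α` is a binary (dyadic) convex combination with full digits of even
integer points of `E`. -/
def MemBconv {n : ℕ} (E : Set (Fin n → ℝ)) (α : Fin n →₀ ℕ) : Prop :=
  ∃ (t N : ℕ) (A : Fin t → Fin n →₀ ℕ) (δ : Fin t → Fin N → Bool),
    0 < t ∧
    (∀ s, expPt (A s) ∈ E ∧ ∀ i, Even (A s i)) ∧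
    (∀ s : Fin t, 0 < ∑ k : Fin N, (if δ s k then ((2 : ℚ) ^ (k.1 + 1))⁻¹ else 0)) ∧
    (∑ s : Fin t, ∑ k : Fin N, (if δ s k then ((2 : ℚ) ^ (k.1 + 1))⁻¹ else 0)) = 1 ∧
    (∀ k : Fin N, ∃ s, δ s k = true) ∧
    (∀ i, (α i : ℚ) = ∑ s : Fin t,
      (∑ k : Fin N, (if δ s k then ((2 : ℚ) ^ (k.1 + 1))⁻¹ else 0)) * (A s i : ℚ))

/-- `f` has a regular Newton polyhedron: every vertex of `Γ(f)` is even with positive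
coefficient, and for each maximal face `γ` every "bad" exponent of `f` inside
`conv Δ(f_γ) \ γ` lies in `bconv Δ_E(f_γ)`. -/
def RegularNewtonPolyhedron {n : ℕ} (f : MvPolynomial (Fin n) ℝ) : Prop :=
  (∀ α : Fin n →₀ ℕ, expPt α ∈ Set.extremePoints ℝ (NewtonPolyhedron f) →
    (∀ i, Even (α i)) ∧ 0 < coeff α f) ∧
  (∀ γ, IsMaximalFace f γ → ∀ α ∈ f.support,
    expPt α ∈ convexHull ℝ (DeltaSet (facePart f γ)) → expPt α ∉ γ →
    ((¬ ∀ i, Even (α i)) ∨ coeff α f < 0) →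
    MemBconv (DeltaESet (facePart f γ)) α)

open Filter Topology Matrix

theorem expPt_injective {n : ℕ} : Function.Injective (expPt (n := n)) := fun _ _ h =>
  Finsupp.ext fun i => Nat.cast_injective (congrFun h i)

theorem exists_dotProduct_lt_of_mem_extremePoints {ι : Type*} [Fintype ι]
    {C T : Set (ι → ℝ)} {x : ι → ℝ} (hC : Convex ℝ C) (hx : x ∈ C.extremePoints ℝ)
    (hT : T.Finite) (hTC : T ⊆ C) (hxT : x ∉ T) :
    ∃ u : ι → ℝ, ∀ y ∈ T, u ⬝ᵥ x < u ⬝ᵥ y := by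
  have hTsub : T ⊆ C \ {x} := fun y hy => ⟨hTC hy, fun h => hxT (h ▸ hy)⟩
  -- `C \ {x}` is convex because `x` is extreme, so it contains `conv T`.
  have hx_notMem : x ∉ convexHull ℝ T := fun h =>
    (convexHull_min hTsub (hC.mem_extremePoints_iff_convex_sdiff.1 hx).2 h).2 rfl
  obtain ⟨L, c, hLx, hLT⟩ := geometric_hahn_banach_point_closed (convex_convexHull ℝ T)
    (hT.isCompact_convexHull ℝ).isClosed hx_notMem
  have hL : ∀ v, L v = (fun i => L fun j => if i = j then 1 else 0) ⬝ᵥ v := fun v => by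
    rw [dotProduct_comm]
    exact (L : (ι → ℝ) →ₗ[ℝ] ℝ).pi_apply_eq_sum_univ v
  refine ⟨fun i => L fun j => if i = j then 1 else 0, fun y hy => ?_⟩
  rw [← hL, ← hL]
  exact hLx.trans (hLT y (subset_convexHull ℝ T hy))

theorem mem_support_of_mem_extremePoints_newtonPolyhedron {n : ℕ}
    {f : MvPolynomial (Fin n) ℝ} {α : Fin n →₀ ℕ}
    (hα : expPt α ∈ (NewtonPolyhedron f).extremePoints ℝ) : α ∈ f.support := by
  obtain ⟨β, hβ, hβα⟩ := extremePoints_convexHull_subset hα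
  have hΔ : DeltaSet f ⊆ NewtonPolyhedron f := subset_convexHull ℝ _
  -- `expPt α` is the midpoint of `expPt β` and `2 α - β`, both in `Δ(f)`.
  have hmid : expPt α ∈ openSegment ℝ (expPt β) ((2 : ℝ) • expPt α - expPt β) :=
    ⟨1 / 2, 1 / 2, by norm_num, by norm_num, by norm_num, by
      funext i; simp only [Pi.add_apply, Pi.smul_apply, Pi.sub_apply, smul_eq_mul]; ring⟩
  have hreflect : (2 : ℝ) • expPt α - expPt β ∈ DeltaSet f := ⟨β, hβ, fun i => by
    have := hβα i
    simp only [expPt, Pi.sub_apply, Pi.smul_apply, smul_eq_mul] at this ⊢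
    linarith⟩
  have := hα.2 (hΔ ⟨β, hβ, fun _ => le_rfl⟩) (hΔ hreflect) hmid
  exact expPt_injective this ▸ hβ

theorem exists_dotProduct_expPt_lt_of_mem_extremePoints_newtonPolyhedron {n : ℕ}
    {f : MvPolynomial (Fin n) ℝ} {α : Fin n →₀ ℕ}
    (hα : expPt α ∈ (NewtonPolyhedron f).extremePoints ℝ) :
    ∃ u : Fin n → ℝ, ∀ β ∈ f.support, β ≠ α → u ⬝ᵥ expPt α < u ⬝ᵥ expPt β := by
  obtain ⟨u, hu⟩ := exists_dotProduct_lt_of_mem_extremePoints (convex_convexHull ℝ _) hα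
    ((f.support.finite_toSet.sdiff (t := {α})).image expPt)
    (by rintro _ ⟨β, ⟨hβ, -⟩, rfl⟩; exact subset_convexHull ℝ _ ⟨β, hβ, fun _ => le_rfl⟩)
    (by rintro ⟨β, ⟨-, hβα⟩, hβ⟩; exact hβα (expPt_injective hβ))
  exact ⟨u, fun β hβ hβα => hu _ ⟨β, ⟨hβ, hβα⟩, rfl⟩⟩

section Asymptotics

variable {n : ℕ} (f : MvPolynomial (Fin n) ℝ)

theorem eval_mul_exp_eq_sum (σ u : Fin n → ℝ) (s : ℝ) :
    eval (fun i => σ i * Real.exp (s * u i)) f =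
      ∑ β ∈ f.support, coeff β f * (∏ i, σ i ^ β i) * Real.exp (s * (u ⬝ᵥ expPt β)) := by
  rw [eval_eq']
  refine Finset.sum_congr rfl fun β _ => ?_
  simp only [mul_pow, ← Real.exp_nat_mul, Finset.prod_mul_distrib, ← Real.exp_sum,
    dotProduct, expPt, Finset.mul_sum, mul_assoc]
  congr 3
  exact Finset.sum_congr rfl fun i _ => by ring

theorem tendsto_exp_mul_eval_mul_exp_atBot {α : Fin n →₀ ℕ} {u : Fin n → ℝ}
    (hmin : ∀ β ∈ f.support, β ≠ α → u ⬝ᵥ expPt α < u ⬝ᵥ expPt β) (σ : Fin n → ℝ) :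
    Tendsto (fun s => Real.exp (-(s * (u ⬝ᵥ expPt α))) *
        eval (fun i => σ i * Real.exp (s * u i)) f) atBot
      (𝓝 (coeff α f * ∏ i, σ i ^ α i)) := by
  have hterm : ∀ β ∈ f.support, Tendsto
      (fun s => coeff β f * (∏ i, σ i ^ β i) * Real.exp (s * (u ⬝ᵥ expPt β - u ⬝ᵥ expPt α)))
      atBot (𝓝 (if β = α then coeff α f * ∏ i, σ i ^ α i else 0)) := by
    intro β hβ
    split_ifs with hβα
    · subst hβα
      simp
    · have hexp := Real.tendsto_exp_atBot.comp
        (tendsto_id.atBot_mul_const (sub_pos.2 (hmin β hβ hβα)))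
      simpa using hexp.const_mul (coeff β f * ∏ i, σ i ^ β i)
  have hlim : ∑ β ∈ f.support, (if β = α then coeff α f * ∏ i, σ i ^ α i else 0) =
      coeff α f * ∏ i, σ i ^ α i := by
    rw [Finset.sum_ite_eq']
    split_ifs with hα
    · rfl
    · rw [notMem_support_iff.mp hα, zero_mul]
  rw [← hlim]
  refine (tendsto_finsetSum _ hterm).congr fun s => ?_
  rw [eval_mul_exp_eq_sum, Finset.mul_sum]
  refine Finset.sum_congr rfl fun β _ => ?_
  rw [mul_sub, sub_eq_neg_add, Real.exp_add]
  ring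

theorem coeff_mul_prod_pow_nonneg (hnonneg : ∀ x, 0 ≤ eval x f) {α : Fin n →₀ ℕ}
    {u : Fin n → ℝ} (hmin : ∀ β ∈ f.support, β ≠ α → u ⬝ᵥ expPt α < u ⬝ᵥ expPt β)
    (σ : Fin n → ℝ) : 0 ≤ coeff α f * ∏ i, σ i ^ α i :=
  ge_of_tendsto' (tendsto_exp_mul_eval_mul_exp_atBot f hmin σ) fun _ =>
    mul_nonneg (Real.exp_pos _).le (hnonneg _)

end Asymptotics

theorem even_and_pos_of_forall_mul_prod_pow_nonneg {ι : Type*} [Fintype ι] {α : ι → ℕ}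
    {c : ℝ} (hc : c ≠ 0) (h : ∀ σ : ι → ℝ, 0 ≤ c * ∏ i, σ i ^ α i) :
    (∀ i, Even (α i)) ∧ 0 < c := by
  have hpos : 0 < c := hc.symm.lt_of_le (by simpa using h 1)
  refine ⟨fun i => ?_, hpos⟩
  by_contra hodd
  have hflip := h (Function.update 1 i (-1))
  rw [Finset.prod_eq_single i (fun j _ hj => by simp [hj]) (by simp),
    Function.update_self, (Nat.not_even_iff_odd.mp hodd).neg_one_pow] at hflip
  linarith

theorem vertex_even_pos_of_nonneg_general {n : ℕ} (f : MvPolynomial (Fin n) ℝ)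
    (hnonneg : ∀ x : Fin n → ℝ, 0 ≤ MvPolynomial.eval x f)
    (α : Fin n →₀ ℕ) (hα : expPt α ∈ Set.extremePoints ℝ (NewtonPolyhedron f)) :
    (∀ i, Even (α i)) ∧ 0 < MvPolynomial.coeff α f := by
  obtain ⟨u, hmin⟩ := exists_dotProduct_expPt_lt_of_mem_extremePoints_newtonPolyhedron hα
  exact even_and_pos_of_forall_mul_prod_pow_nonneg
    (mem_support_iff.mp (mem_support_of_mem_extremePoints_newtonPolyhedron hα))
    (coeff_mul_prod_pow_nonneg f hnonneg hmin)

/-- If `f` is nonnegative on `ℝⁿ` with `f(0) = 0`, then every vertex of the Newton diagram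
of `f` is an even exponent with strictly positive coefficient. -/
theorem vertex_even_pos_of_nonneg {n : ℕ} (f : MvPolynomial (Fin n) ℝ)
    (hnonneg : ∀ x : Fin n → ℝ, 0 ≤ MvPolynomial.eval x f)
    (hf0 : MvPolynomial.eval (0 : Fin n → ℝ) f = 0)
    (α : Fin n →₀ ℕ) (hα : expPt α ∈ Set.extremePoints ℝ (NewtonPolyhedron f)) :
    (∀ i, Even (α i)) ∧ 0 < MvPolynomial.coeff α f :=
  vertex_even_pos_of_nonneg_general f hnonneg α hα

end
end

section
/- Let C_α > 0 be given for every even exponent α ∈ Z_{≥0}^n with |α| = 2k, and let f be any polynomial whose support consists of exponents of degree 2k+1. Then there exists D > 0 such that Σ_{α even, |α|=2k} C_α x^α + f + D·Σ_{i=1}^n x_i^{(2k+2)e_i} is a sum of squares of polynomials, where x^{(2k+2)e_i} = x_i^{2k+2}. -/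
/-!
Split every exponent `α` of `f` as `α = u + w` with `|u| = k`, `|w| = k + 1`, and complete the
square: `ε x^{2u} + c x^α + (c² / 4ε) x^{2w} = (√ε x^u + (c / 2√ε) x^w)²`. For `ε` small the
terms `ε x^{2u}` are absorbed by `g`, whose coefficient on every even exponent of degree `2k` is
positive. Each remaining `x^{2w}` is an even monomial of degree `2k + 2`, and such a monomial is
bounded, modulo sums of squares, by a multiple of `∑ᵢ xᵢ^{2k+2}`: peeling off one variable at a
time, this reduces to `A^{d+1} + B^{d+1} - A B^d = (A - B)² ∑ A^i B^{d-1-i} + A^d B` for squares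
`A = a²`, `B = b²`.
-/

open MvPolynomial Topology

namespace Finsupp

variable {σ : Type*}

theorem exists_eq_add_of_degree_eq_add {m n : ℕ} (α : σ →₀ ℕ)
    (h : α.degree = m + n) : ∃ u w, α = u + w ∧ u.degree = m ∧ w.degree = n := by
  obtain ⟨u, hu, rfl⟩ := α.exists_le_degree_eq m (by omega)
  obtain ⟨w, rfl⟩ := le_iff_exists_add.mp hu
  exact ⟨_, w, rfl, rfl, by rw [map_add] at h; omega⟩

theorem exists_eq_add_single_of_degree_eq_succ {d : ℕ} (w : σ →₀ ℕ)
    (hw : w.degree = d + 1) : ∃ w' j, w = w' + single j 1 ∧ w'.degree = d := by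
  obtain ⟨j, hj⟩ : ∃ j, w j ≠ 0 := by
    by_contra! h
    simp [show w = 0 from ext h] at hw
  have hsplit : w = (w - single j 1) + single j 1 :=
    (tsub_add_cancel_of_le (single_le_iff.mpr (Nat.one_le_iff_ne_zero.mpr hj))).symm
  refine ⟨_, j, hsplit, ?_⟩
  rw [hsplit, map_add, degree_single] at hw
  omega

end Finsupp

section SumSq

variable {A : Type*} [CommRing A]

theorem IsSumSq.smul_of_nonneg [Algebra ℝ A] {r : ℝ} (hr : 0 ≤ r) {a : A} (ha : IsSumSq a) :
    IsSumSq (r • a) := by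
  rw [Algebra.smul_def, ← Real.mul_self_sqrt hr, map_mul]
  exact (IsSumSq.mul_self _).mul ha

theorem isSquare_smul_sq_add_smul_mul_add [Algebra ℝ A] {ε : ℝ} (hε : 0 < ε) (c : ℝ) (a b : A) :
    IsSquare (ε • a ^ 2 + c • (a * b) + (c ^ 2 / (4 * ε)) • b ^ 2) := by
  have hs : √ε ^ 2 = ε := Real.sq_sqrt hε.le
  set s := algebraMap ℝ A √ε
  set t := algebraMap ℝ A (c / (2 * √ε))
  have h₁ : algebraMap ℝ A ε = s ^ 2 := by rw [← map_pow, hs]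
  have h₂ : algebraMap ℝ A c = 2 * s * t := by
    rw [← map_ofNat (algebraMap ℝ A), ← map_mul, ← map_mul]; congr 1; field_simp
  have h₃ : algebraMap ℝ A (c ^ 2 / (4 * ε)) = t ^ 2 := by
    rw [← map_pow]; congr 1; field_simp; rw [hs]; ring
  refine ⟨s * a + t * b, ?_⟩
  simp only [Algebra.smul_def]
  linear_combination a ^ 2 * h₁ + a * b * h₂ + b ^ 2 * h₃

theorem isSumSq_sq_pow_add_sq_pow_sub_sq_mul_pow (a b : A) (d : ℕ) :
    IsSumSq ((a ^ (d + 1)) ^ 2 + (b ^ (d + 1)) ^ 2 - (a * b ^ d) ^ 2) := by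
  have hgeom := geom_sum₂_mul (a ^ 2) (b ^ 2) d
  have hsq : ∀ i, (a ^ i * b ^ (d - 1 - i)) ^ 2 = (a ^ 2) ^ i * (b ^ 2) ^ (d - 1 - i) :=
    fun i => by ring
  have key : (a ^ (d + 1)) ^ 2 + (b ^ (d + 1)) ^ 2 - (a * b ^ d) ^ 2 =
      (a ^ 2 - b ^ 2) ^ 2 * ∑ i ∈ Finset.range d, (a ^ i * b ^ (d - 1 - i)) ^ 2 +
        (a ^ d * b) ^ 2 := by
    simp only [hsq]
    linear_combination (b ^ 2 - a ^ 2) * hgeom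
  rw [key]
  exact ((IsSquare.sq _).isSumSq.mul (IsSumSq.sum_sq _ _)).add (IsSquare.sq _).isSumSq

end SumSq

section Dominated

variable {A : Type*} [CommRing A] [Algebra ℝ A]

def SumSqDominated (p q : A) : Prop := ∃ c : ℝ, 0 ≤ c ∧ IsSumSq (c • q - p)

namespace SumSqDominated

variable {p p' q r s : A}

theorem of_isSumSq_sub (h : IsSumSq (q - p)) : SumSqDominated p q :=
  ⟨1, zero_le_one, by rwa [one_smul]⟩

theorem add (hp : SumSqDominated p q) (hp' : SumSqDominated p' q) : SumSqDominated (p + p') q := by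
  obtain ⟨c, hc, h⟩ := hp
  obtain ⟨c', hc', h'⟩ := hp'
  refine ⟨c + c', add_nonneg hc hc', ?_⟩
  rw [show (c + c') • q - (p + p') = (c • q - p) + (c' • q - p') by module]
  exact h.add h'

theorem zero : SumSqDominated 0 q :=
  ⟨0, le_rfl, by rw [zero_smul, sub_zero]; exact IsSumSq.zero⟩

theorem sum {ι : Type*} {I : Finset ι} {p : ι → A} (hp : ∀ i ∈ I, SumSqDominated (p i) q) :
    SumSqDominated (∑ i ∈ I, p i) q :=
  Finset.sum_induction p (SumSqDominated · q) (fun _ _ => add) zero hp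

theorem smul {t : ℝ} (ht : 0 ≤ t) (hp : SumSqDominated p q) : SumSqDominated (t • p) q := by
  obtain ⟨c, hc, h⟩ := hp
  refine ⟨t * c, mul_nonneg ht hc, ?_⟩
  rw [show (t * c) • q - t • p = t • (c • q - p) by module]
  exact h.smul_of_nonneg ht

theorem trans (hpq : SumSqDominated p q) (hqr : SumSqDominated q r) : SumSqDominated p r := by
  obtain ⟨c, hc, h⟩ := hpq
  obtain ⟨c', hc', h'⟩ := hqr
  refine ⟨c * c', mul_nonneg hc hc', ?_⟩
  rw [show (c * c') • r - p = c • (c' • r - q) + (c • q - p) by module]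
  exact (h'.smul_of_nonneg hc).add h

theorem mul_left (hs : IsSumSq s) (hpq : SumSqDominated p q) : SumSqDominated (s * p) (s * q) := by
  obtain ⟨c, hc, h⟩ := hpq
  refine ⟨c, hc, ?_⟩
  rw [← mul_smul_comm, ← mul_sub]
  exact hs.mul h

theorem exists_pos_isSumSq_sub (hpq : SumSqDominated p q) (hq : IsSumSq q) :
    ∃ D : ℝ, 0 < D ∧ IsSumSq (D • q - p) := by
  obtain ⟨c, hc, h⟩ := hpq
  refine ⟨c + 1, by positivity, ?_⟩
  rw [show (c + 1) • q - p = (c • q - p) + q by module]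
  exact h.add hq

end SumSqDominated

theorem sumSqDominated_sq_sum_sq {ι : Type*} [Fintype ι] (x : ι → A) (i : ι) :
    SumSqDominated (x i ^ 2) (∑ j, x j ^ 2) := by
  classical
  refine .of_isSumSq_sub ?_
  rw [← Finset.add_sum_erase _ _ (Finset.mem_univ i), add_sub_cancel_left]
  exact IsSumSq.sum_sq _ _

end Dominated

namespace MvPolynomial

variable {σ : Type*}

theorem isSquare_monomial {β : σ →₀ ℕ} (hβ : ∀ i, Even (β i)) {c : ℝ} (hc : 0 ≤ c) :
    IsSquare (monomial β c) := by
  set γ := β.mapRange (· / 2) (Nat.zero_div 2)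
  have hγ : γ + γ = β := by
    ext i
    obtain ⟨r, hr⟩ := hβ i
    simp only [γ, Finsupp.add_apply, Finsupp.mapRange_apply]
    omega
  exact ⟨monomial γ √c, by rw [monomial_mul, hγ, Real.mul_self_sqrt hc]⟩

theorem isSumSq_of_even_of_coeff_nonneg {p : MvPolynomial σ ℝ}
    (heven : ∀ β ∈ p.support, ∀ i, Even (β i)) (hnonneg : ∀ β, 0 ≤ coeff β p) : IsSumSq p := by
  rw [p.as_sum]
  exact IsSumSq.sum fun β hβ => (isSquare_monomial (heven β hβ) (hnonneg β)).isSumSq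

theorem exists_pos_isSumSq_sub_smul {p q : MvPolynomial σ ℝ}
    (heven : ∀ β ∈ p.support, ∀ i, Even (β i)) (hpos : ∀ β ∈ p.support, 0 < coeff β p)
    (hq : q.support ⊆ p.support) : ∃ ε : ℝ, 0 < ε ∧ IsSumSq (p - ε • q) := by
  obtain ⟨ε, hsmall, hε⟩ : ∃ ε : ℝ, (∀ β ∈ p.support, ε * coeff β q < coeff β p) ∧ 0 < ε := by
    refine Filter.Eventually.exists (f := 𝓝[>] (0 : ℝ))
      (((Filter.eventually_all_finset _).2 fun β hβ => ?_).and self_mem_nhdsWithin)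
    have hlim : Filter.Tendsto (fun ε : ℝ => ε * coeff β q) (𝓝[>] 0) (𝓝 (0 * coeff β q)) :=
      ((continuous_id.mul continuous_const).tendsto 0).mono_left nhdsWithin_le_nhds
    exact hlim.eventually (gt_mem_nhds (by simpa using hpos β hβ))
  have houtside : ∀ β ∉ p.support, coeff β (p - ε • q) = 0 := fun β hβ => by
    rw [coeff_sub, coeff_smul, notMem_support_iff.mp hβ, notMem_support_iff.mp (mt (@hq β) hβ)]
    simp
  refine ⟨ε, hε, isSumSq_of_even_of_coeff_nonneg (fun β hβ => heven β ?_) fun β => ?_⟩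
  · by_contra h
    exact mem_support_iff.mp hβ (houtside β h)
  · by_cases hβ : β ∈ p.support
    · rw [coeff_sub, coeff_smul, smul_eq_mul]
      exact sub_nonneg.mpr (hsmall β hβ).le
    · exact (houtside β hβ).ge

theorem support_sum_monomial_sq_subset {ι : Type*} {s : Finset ι} {u : ι → σ →₀ ℕ}
    {S : Finset (σ →₀ ℕ)} (h : ∀ i ∈ s, u i + u i ∈ S) :
    (∑ i ∈ s, monomial (u i) (1 : ℝ) ^ 2).support ⊆ S := by
  classical
  intro β hβ
  obtain ⟨i, hi, hβi⟩ := Finset.mem_biUnion.mp (support_sum hβ)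
  rw [sq, monomial_mul, one_mul] at hβi
  rw [Finset.mem_singleton.mp (support_monomial_subset hβi)]
  exact h i hi

theorem sum_coeff_smul_monomial_mul_monomial {p : MvPolynomial σ ℝ} {u w : (σ →₀ ℕ) → σ →₀ ℕ}
    (h : ∀ α ∈ p.support, α = u α + w α) :
    ∑ α ∈ p.support, coeff α p • (monomial (u α) 1 * monomial (w α) 1) = p := by
  conv_rhs => rw [← p.support_sum_monomial_coeff]
  refine Finset.sum_congr rfl fun α hα => ?_
  rw [monomial_mul, one_mul, ← h α hα, smul_monomial, smul_eq_mul, mul_one]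

theorem sumSqDominated_monomial_sq [Fintype σ] (d : ℕ) (w : σ →₀ ℕ) (hw : w.degree = d + 1) :
    SumSqDominated (monomial w (1 : ℝ) ^ 2) (∑ i, (X i ^ (d + 1)) ^ 2) := by
  induction d generalizing w with
  | zero =>
    obtain ⟨w', j, rfl, hw'⟩ := w.exists_eq_add_single_of_degree_eq_succ hw
    rw [(Finsupp.degree_eq_zero_iff _).mp hw', zero_add, ← X_pow_eq_monomial, pow_one]
    simpa using sumSqDominated_sq_sum_sq (X (R := ℝ)) j
  | succ d ih =>
    obtain ⟨w', j, rfl, hw'⟩ := w.exists_eq_add_single_of_degree_eq_succ hw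
    have hstep : SumSqDominated (X j ^ 2 * ∑ i, (X i ^ (d + 1)) ^ 2)
        (∑ i, (X i ^ (d + 1 + 1)) ^ 2 : MvPolynomial σ ℝ) := by
      rw [Finset.mul_sum]
      refine SumSqDominated.sum fun i _ => ?_
      rw [← mul_pow]
      exact (SumSqDominated.of_isSumSq_sub
        (isSumSq_sq_pow_add_sq_pow_sub_sq_mul_pow (X j) (X i) (d + 1))).trans
        ((sumSqDominated_sq_sum_sq (fun k => X k ^ (d + 1 + 1)) j).add
          (sumSqDominated_sq_sum_sq (fun k => X k ^ (d + 1 + 1)) i))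
    rw [monomial_add_single, pow_one, mul_pow, mul_comm]
    exact ((ih w' hw').mul_left (IsSquare.sq (X j)).isSumSq).trans hstep

end MvPolynomial

/-- Let `g = Σ_{α even, |α| = 2k} C_α x^α` with all `C_α > 0`, and let `f` be a polynomial all of
whose exponents have degree `2k+1`. Then there exists `D > 0` such that
`g + f + D·Σᵢ xᵢ^{2k+2}` is a sum of squares of polynomials. -/
theorem sos_of_even_part_dominates (n k : ℕ) (g f : MvPolynomial (Fin n) ℝ)
    (hgsupp : ∀ α : Fin n →₀ ℕ, α ∈ g.support ↔ ((∑ i, α i = 2 * k) ∧ ∀ i, Even (α i)))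
    (hgpos : ∀ α ∈ g.support, 0 < coeff α g)
    (hfsupp : ∀ α ∈ f.support, ∑ i, α i = 2 * k + 1) :
    ∃ D : ℝ, 0 < D ∧
      IsSumSq (g + f + C D * ∑ i : Fin n, X i ^ (2 * k + 2)) := by
  have hsplit : ∀ α ∈ f.support, ∃ u w, α = u + w ∧ u.degree = k ∧ w.degree = k + 1 :=
    fun α hα => α.exists_eq_add_of_degree_eq_add (by rw [Finsupp.degree_eq_sum, hfsupp α hα]; ring)
  choose! u w hsplit hu hw using hsplit
  set a := fun α => monomial (u α) (1 : ℝ)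
  set b := fun α => monomial (w α) (1 : ℝ)
  set P := ∑ i : Fin n, (X i : MvPolynomial (Fin n) ℝ) ^ (2 * k + 2)
  obtain ⟨ε, hε, hg⟩ := exists_pos_isSumSq_sub_smul (fun β hβ => ((hgsupp β).mp hβ).2) hgpos
    (support_sum_monomial_sq_subset fun α hα => (hgsupp _).mpr
      ⟨by rw [← Finsupp.degree_eq_sum, map_add, hu α hα]; ring, fun i => ⟨u α i, rfl⟩⟩)
  have hP : P = ∑ i, (X i ^ (k + 1)) ^ 2 := Finset.sum_congr rfl fun i _ => by ring
  obtain ⟨D, hD, hW⟩ := (SumSqDominated.sum fun α hα =>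
    (sumSqDominated_monomial_sq k (w α) (hw α hα)).smul (t := coeff α f ^ 2 / (4 * ε))
      (by positivity)).exists_pos_isSumSq_sub (IsSumSq.sum_sq _ _)
  rw [← hP] at hW
  refine ⟨D, hD, ?_⟩
  have hsum : g + f + C D * P = (g - ε • ∑ α ∈ f.support, a α ^ 2) +
      ∑ α ∈ f.support, (ε • a α ^ 2 + coeff α f • (a α * b α) +
        (coeff α f ^ 2 / (4 * ε)) • b α ^ 2) +
      (D • P - ∑ α ∈ f.support, (coeff α f ^ 2 / (4 * ε)) • b α ^ 2) := by
    rw [Finset.sum_add_distrib, Finset.sum_add_distrib, sum_coeff_smul_monomial_mul_monomial hsplit,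
      ← Finset.smul_sum, ← smul_eq_C_mul]
    abel
  rw [hsum]
  exact (hg.add (IsSumSq.sum fun α _ => (isSquare_smul_sq_add_smul_mul_add hε _ _ _).isSumSq)).add hW
end

section
/- Let f_{2m} be the lowest-degree homogeneous part of a polynomial f ∈ R[x_1,...,x_n], of degree 2m. If f_{2m} lies in the relative interior of the cone of sums of squares of homogeneous polynomials of degree m (within its linear span), then f is a sum of squares of formal power series. -/
open MvPolynomial

/-- The cone of sums of squares of homogeneous polynomials of degree `m`. -/
def sosFormsCone (n m : ℕ) : Set (MvPolynomial (Fin n) ℝ) :=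
  {p | ∃ l : Multiset (MvPolynomial (Fin n) ℝ),
    (∀ q ∈ l, q.IsHomogeneous m) ∧ p = (l.map (· ^ 2)).sum}


/-!
Write `f = f_{2m} + g`, where `g` only involves monomials `x^α` with `|α| > 2m`; each such `α`
splits as `β + β' + τ` with `|β| = |β'| = m` and `τ ≠ 0`. For `δ > 0`,
`δ (x^{2β} + x^{2β'}) + c x^α = (√δ x^β + r x^{β' + τ})² + (x^{β'} w)²` with `2 √δ r = c` and
`w² = δ - r² x^{2τ}`, a power series square root that exists since its constant term is positive.
Extending the segment from `y = Σ_α (x^{2β_α} + x^{2β'_α})` through `f_{2m}` inside the cone gives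
`z = μ f_{2m} + (1 - μ) y` in the cone for some `μ > 1`, hence
`f = μ⁻¹ z + Σ_α ((1 - μ⁻¹) (x^{2β_α} + x^{2β'_α}) + g_α x^α)` is a sum of squares.
-/

theorem Finsupp.exists_add_add_eq_of_add_lt_degree {σ : Type*} {α : σ →₀ ℕ} {k l : ℕ}
    (h : k + l < α.degree) :
    ∃ β β' τ : σ →₀ ℕ, β.degree = k ∧ β'.degree = l ∧ τ ≠ 0 ∧ β + (β' + τ) = α := by
  obtain ⟨β, hβ, hβk⟩ := α.exists_le_degree_eq k (by omega)
  obtain ⟨γ, rfl⟩ := le_iff_exists_add.mp hβ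
  rw [map_add, hβk] at h
  obtain ⟨β', hβ', hβ'l⟩ := γ.exists_le_degree_eq l (by omega)
  obtain ⟨τ, rfl⟩ := le_iff_exists_add.mp hβ'
  rw [map_add, hβ'l] at h
  exact ⟨β, β', τ, hβk, hβ'l, fun hτ => by simp [hτ] at h, rfl⟩

theorem MvPolynomial.lt_degree_of_mem_support_sub_homogeneousComponent {σ R : Type*}
    [CommRing R] {f : MvPolynomial σ R} {k : ℕ}
    (hlow : ∀ j < k, homogeneousComponent j f = 0) {α : σ →₀ ℕ}
    (hα : α ∈ (f - homogeneousComponent k f).support) : k < α.degree := by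
  rw [mem_support_iff, coeff_sub, coeff_homogeneousComponent] at hα
  by_contra! hle
  rcases hle.lt_or_eq with hlt | rfl
  · refine hα ?_
    have h := congrArg (coeff α) (hlow _ hlt)
    rw [coeff_homogeneousComponent, if_pos rfl, coeff_zero] at h
    simp [h]
  · simp at hα

namespace sosFormsCone

variable {n m : ℕ}

theorem zero_mem : (0 : MvPolynomial (Fin n) ℝ) ∈ sosFormsCone n m :=
  ⟨0, by simp, by simp⟩

theorem add_mem {p q : MvPolynomial (Fin n) ℝ} (hp : p ∈ sosFormsCone n m)
    (hq : q ∈ sosFormsCone n m) : p + q ∈ sosFormsCone n m := by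
  obtain ⟨l, hl, rfl⟩ := hp
  obtain ⟨l', hl', rfl⟩ := hq
  refine ⟨l + l', fun q hq => ?_, by simp⟩
  rcases Multiset.mem_add.mp hq with hq | hq
  exacts [hl q hq, hl' q hq]

theorem sq_mem {q : MvPolynomial (Fin n) ℝ} (hq : q.IsHomogeneous m) :
    q ^ 2 ∈ sosFormsCone n m :=
  ⟨{q}, by simpa using hq, by simp⟩

theorem smul_mem {c : ℝ} (hc : 0 ≤ c) {p : MvPolynomial (Fin n) ℝ}
    (hp : p ∈ sosFormsCone n m) : c • p ∈ sosFormsCone n m := by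
  obtain ⟨l, hl, rfl⟩ := hp
  refine ⟨l.map (C √c * ·), ?_, ?_⟩
  · simp only [Multiset.mem_map]
    rintro _ ⟨q, hq, rfl⟩
    simpa using (hl q hq).C_mul √c
  · rw [smul_eq_C_mul, ← Multiset.sum_map_mul_left, Multiset.map_map]
    congr 1
    refine Multiset.map_congr rfl fun q _ => ?_
    simp [mul_pow, ← map_pow, Real.sq_sqrt hc]

theorem isSumSq_coe {p : MvPolynomial (Fin n) ℝ} (hp : p ∈ sosFormsCone n m) :
    IsSumSq (p : MvPowerSeries (Fin n) ℝ) := by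
  obtain ⟨l, -, rfl⟩ := hp
  rw [← coeToMvPowerSeries.ringHom_apply, map_multiset_sum, Multiset.map_map]
  refine AddSubmonoid.multiset_sum_mem (AddSubmonoid.sumSq _) _ fun x hx => ?_
  obtain ⟨q, -, rfl⟩ := Multiset.mem_map.mp hx
  simp [sq]

end sosFormsCone

namespace MvPowerSeries

variable {σ : Type*}

theorem isSquare_one_add {A : Type*} [CommRing A] [Algebra ℚ A] {a : MvPowerSeries σ A}
    (ha : constantCoeff a = 0) : IsSquare (1 + a) := by
  have hs : PowerSeries.HasSubst a := PowerSeries.HasSubst.of_constantCoeff_zero ha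
  have half : (2⁻¹ + 2⁻¹ : ℚ) = ((1 : ℕ) : ℚ) := by norm_num
  refine ⟨(PowerSeries.binomialSeries A (2⁻¹ : ℚ)).subst a, ?_⟩
  rw [← PowerSeries.subst_mul hs, ← PowerSeries.binomialSeries_add, half,
    PowerSeries.binomialSeries_nat, pow_one, PowerSeries.subst_add hs, PowerSeries.subst_X hs,
    ← map_one PowerSeries.C, PowerSeries.subst_C, map_one]

theorem isSquare_of_isSquare_constantCoeff {K : Type*} [Field K] [CharZero K]
    {u : MvPowerSeries σ K} (hu : IsSquare (constantCoeff u)) (hu₀ : constantCoeff u ≠ 0) :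
    IsSquare u := by
  obtain ⟨b, hb⟩ := hu
  have hdecomp : u = C (b * b) * (1 + C (b * b)⁻¹ * (u - C (constantCoeff u))) := by
    rw [mul_add, mul_one, ← mul_assoc, ← map_mul, mul_inv_cancel₀ (hb ▸ hu₀), map_one, one_mul, hb]
    ring
  rw [hdecomp, map_mul]
  refine (IsSquare.mul_self (C b)).mul (isSquare_one_add ?_)
  simp

end MvPowerSeries

theorem isSumSq_of_isSquare_sub {R : Type*} [CommRing R] {s r t : R}
    (hw : IsSquare (s * s - r * r * (t * t))) (p p' : R) :
    IsSumSq (s * s * (p * p + p' * p') + 2 * s * r * (p * (p' * t))) := by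
  obtain ⟨w, hw⟩ := hw
  have h : s * s * (p * p + p' * p') + 2 * s * r * (p * (p' * t)) =
      (s * p + r * (p' * t)) * (s * p + r * (p' * t)) + (w * p') * (w * p') := by
    linear_combination (p' * p') * hw
  rw [h]
  exact (IsSumSq.mul_self _).add (IsSumSq.mul_self _)

theorem isSumSq_coe_smul_add_monomial {σ : Type*} {β β' τ α : σ →₀ ℕ} (hα : β + (β' + τ) = α)
    (hτ : τ ≠ 0) {δ : ℝ} (hδ : 0 < δ) (c : ℝ) :
    IsSumSq ((δ • ((monomial β 1) ^ 2 + (monomial β' 1) ^ 2) + monomial α c :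
      MvPolynomial σ ℝ) : MvPowerSeries σ ℝ) := by
  obtain ⟨s, hs₀, rfl⟩ : ∃ s : ℝ, s ≠ 0 ∧ s * s = δ :=
    ⟨√δ, (Real.sqrt_pos.mpr hδ).ne', Real.mul_self_sqrt hδ.le⟩
  obtain ⟨r, rfl⟩ : ∃ r : ℝ, c = 2 * s * r := ⟨c / (2 * s), by field_simp⟩
  have hmon : monomial α (2 * s * r) =
      C (2 * s * r) * (monomial β 1 * (monomial β' 1 * monomial τ (1 : ℝ))) := by
    rw [monomial_mul, monomial_mul, C_mul_monomial, hα]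
    simp
  have hpoly : (s * s) • ((monomial β 1) ^ 2 + (monomial β' 1) ^ 2) + monomial α (2 * s * r) =
      C s * C s * (monomial β 1 * monomial β 1 + monomial β' 1 * monomial β' 1) +
        2 * C s * C r * (monomial β 1 * (monomial β' 1 * monomial τ (1 : ℝ))) := by
    rw [hmon, smul_eq_C_mul]
    simp only [map_mul, map_ofNat]
    ring
  have ht : MvPowerSeries.constantCoeff (MvPowerSeries.monomial τ (1 : ℝ) : MvPowerSeries σ ℝ) =
      0 := by
    classical
    rw [← MvPowerSeries.coeff_zero_eq_constantCoeff_apply, MvPowerSeries.coeff_monomial,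
      if_neg hτ.symm]
  have hw : IsSquare (MvPowerSeries.C s * MvPowerSeries.C s -
      MvPowerSeries.C r * MvPowerSeries.C r *
        (MvPowerSeries.monomial τ 1 * MvPowerSeries.monomial τ 1) : MvPowerSeries σ ℝ) := by
    apply MvPowerSeries.isSquare_of_isSquare_constantCoeff <;>
      simp only [map_sub, map_mul, MvPowerSeries.constantCoeff_C, ht, mul_zero, sub_zero]
    · exact IsSquare.mul_self s
    · exact mul_ne_zero hs₀ hs₀
  rw [hpoly, ← coeToMvPowerSeries.ringHom_apply]
  simp only [map_add, map_mul, map_ofNat, coeToMvPowerSeries.ringHom_apply, coe_C, coe_monomial]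
  exact isSumSq_of_isSquare_sub hw _ _

theorem sos_powerSeries_of_rint_lowest_part_general (n m : ℕ) (f : MvPolynomial (Fin n) ℝ)
    (hlow : ∀ j, j < 2 * m → MvPolynomial.homogeneousComponent j f = 0)
    (hrint : MemRint (sosFormsCone n m) (MvPolynomial.homogeneousComponent (2 * m) f)) :
    IsSumSq (f : MvPowerSeries (Fin n) ℝ) := by
  set F := homogeneousComponent (2 * m) f
  set g := f - F
  choose! B B' T hB hB' hT hBT using fun α (hα : α ∈ g.support) =>
    Finsupp.exists_add_add_eq_of_add_lt_degree (k := m) (l := m)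
      (two_mul m ▸ lt_degree_of_mem_support_sub_homogeneousComponent hlow hα)
  set Y : (Fin n →₀ ℕ) → MvPolynomial (Fin n) ℝ :=
    fun α => monomial (B α) 1 ^ 2 + monomial (B' α) 1 ^ 2
  have hY : ∑ α ∈ g.support, Y α ∈ sosFormsCone n m :=
    Finset.sum_induction _ _ (fun _ _ => sosFormsCone.add_mem) sosFormsCone.zero_mem
      fun α hα => sosFormsCone.add_mem (sosFormsCone.sq_mem (isHomogeneous_monomial _ (hB α hα)))
        (sosFormsCone.sq_mem (isHomogeneous_monomial _ (hB' α hα)))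
  obtain ⟨μ, hμ, hz⟩ := hrint.2 _ hY
  have hf : f = μ⁻¹ • (μ • F + (1 - μ) • ∑ α ∈ g.support, Y α) +
      ∑ α ∈ g.support, ((1 - μ⁻¹) • Y α + monomial α (coeff α g)) := by
    rw [Finset.sum_add_distrib (f := fun α => (1 - μ⁻¹) • Y α), ← Finset.smul_sum,
      support_sum_monomial_coeff]
    generalize ∑ α ∈ g.support, Y α = y
    have hμ₀ : μ ≠ 0 := by positivity
    simp only [g]
    match_scalars <;> field_simp <;> ring
  rw [hf, ← coeToMvPowerSeries.ringHom_apply, map_add, map_sum]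
  exact (sosFormsCone.isSumSq_coe (sosFormsCone.smul_mem (by positivity) hz)).add
    (IsSumSq.sum fun α hα => isSumSq_coe_smul_add_monomial (hBT α hα) (hT α hα)
      (sub_pos.2 (inv_lt_one_of_one_lt₀ hμ)) _)

/-- If the lowest homogeneous part `f_{2m}` of `f` lies in the relative interior of the cone of
sums of squares of degree-`m` forms, then `f` is a sum of squares of formal power series. -/
theorem sos_powerSeries_of_rint_lowest_part (n m : ℕ) (f : MvPolynomial (Fin n) ℝ)
    (hlow : ∀ j, j < 2 * m → MvPolynomial.homogeneousComponent j f = 0)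
    (hne : MvPolynomial.homogeneousComponent (2 * m) f ≠ 0)
    (hrint : MemRint (sosFormsCone n m) (MvPolynomial.homogeneousComponent (2 * m) f)) :
    IsSumSq (f : MvPowerSeries (Fin n) ℝ) :=
  sos_powerSeries_of_rint_lowest_part_general n m f hlow hrint
end

section
/- Let β^1, ..., β^{N+1} ∈ (2Z_{≥0})^n be such that α := Σ_{k=1}^N 2^{-k} β^k + 2^{-N} β^{N+1} lies in Z_{≥0}^n. Then for any ε > 0, any a ∈ R, and any t ∈ {1, ..., N+1}, there exists M > 0 such that ε·Σ_{k=1}^{N+1} x^{β^k} - a x^α + M x^{β^t} is a sum of squares of polynomials. -/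
open MvPolynomial

private noncomputable def chainC (a : ℝ) (b : ℕ → ℝ) : ℕ → ℝ
  | 0 => a
  | j+1 => (chainC a b j)^2 / (4 * b (j+1))

private lemma chainC_zero (a : ℝ) (b : ℕ → ℝ) : chainC a b 0 = a := rfl

private lemma chainC_succ (a : ℝ) (b : ℕ → ℝ) (j : ℕ) :
    chainC a b (j+1) = (chainC a b j)^2 / (4 * b (j+1)) := rfl

private lemma square_expand {n : ℕ} (G D : Fin n →₀ ℕ) (r c : ℝ) (hr : 0 < r) :
    (Real.sqrt r • monomial G (1:ℝ) - (c / (2 * Real.sqrt r)) • monomial D (1:ℝ)) *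
    (Real.sqrt r • monomial G (1:ℝ) - (c / (2 * Real.sqrt r)) • monomial D (1:ℝ))
    = r • monomial (G+G) (1:ℝ) - c • monomial (G+D) (1:ℝ)
      + (c^2/(4*r)) • monomial (D+D) (1:ℝ) := by
  have hs : Real.sqrt r ≠ 0 := by positivity
  have hs2 : Real.sqrt r * Real.sqrt r = r := Real.mul_self_sqrt hr.le
  set s := Real.sqrt r with hsdef
  set u := c / (2 * s) with hudef
  have key : ∀ x y : MvPolynomial (Fin n) ℝ,
      (s • x - u • y) * (s • x - u • y)
        = (s*s) • (x*x) - (2*(s*u)) • (x*y) + (u*u) • (y*y) := by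
    intro x y
    simp only [smul_eq_C_mul, map_mul, map_ofNat]
    ring
  rw [key]
  have e1 : monomial G (1:ℝ) * monomial G 1 = monomial (G+G) 1 := by
    rw [monomial_mul, one_mul]
  have e2 : monomial G (1:ℝ) * monomial D 1 = monomial (G+D) 1 := by
    rw [monomial_mul, one_mul]
  have e3 : monomial D (1:ℝ) * monomial D 1 = monomial (D+D) 1 := by
    rw [monomial_mul, one_mul]
  rw [e1, e2, e3, hs2, show 2*(s*u) = c by rw [hudef]; field_simp,
    show u*u = c^2/(4*r) by rw [hudef, ← hs2]; field_simp; ring]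

private lemma telescope {n : ℕ} (N : ℕ) (β A D G : ℕ → (Fin n →₀ ℕ))
    (a : ℝ) (b : ℕ → ℝ) (hb : ∀ j, 0 < b j)
    (hGG : ∀ j, 1 ≤ j → j ≤ N → G j + G j = β j)
    (hGD : ∀ j, 1 ≤ j → j ≤ N → G j + D j = A (j-1))
    (hDD : ∀ j, 1 ≤ j → j ≤ N → D j + D j = A j) :
    ∀ m, m ≤ N →
      (∑ j ∈ Finset.Icc 1 m,
        (Real.sqrt (b j) • monomial (G j) (1:ℝ)
          - (chainC a b (j-1) / (2 * Real.sqrt (b j))) • monomial (D j) (1:ℝ)) *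
        (Real.sqrt (b j) • monomial (G j) (1:ℝ)
          - (chainC a b (j-1) / (2 * Real.sqrt (b j))) • monomial (D j) (1:ℝ)))
      = (∑ j ∈ Finset.Icc 1 m, b j • monomial (β j) (1:ℝ))
        - a • monomial (A 0) (1:ℝ) + chainC a b m • monomial (A m) (1:ℝ) := by
  intro m
  induction m with
  | zero => intro _; simp [chainC_zero]
  | succ m ih =>
    intro hm
    rw [← Finset.insert_Icc_right_eq_Icc_add_one (by omega : 1 ≤ m+1),
        Finset.sum_insert (by simp), Finset.sum_insert (by simp)]
    rw [ih (by omega)]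
    have hexp := square_expand (G (m+1)) (D (m+1)) (b (m+1)) (chainC a b m) (hb (m+1))
    simp only [Nat.add_sub_cancel]
    rw [hexp, hGG (m+1) (by omega) hm, hGD (m+1) (by omega) hm,
        hDD (m+1) (by omega) hm]
    simp only [Nat.add_sub_cancel]
    rw [← chainC_succ]
    abel

/-- If `β^1, …, β^{N+1}` are even exponent vectors and
`α = Σ_{k=1}^N 2^{-k} β^k + 2^{-N} β^{N+1}` is a (nonnegative integer) exponent vector, then
for any `ε > 0`, `a ∈ ℝ` and `t ∈ {1, …, N+1}` there exists `M > 0` such that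
`ε·Σ_{k=1}^{N+1} x^{β^k} - a x^α + M x^{β^t}` is a sum of squares of polynomials. -/
theorem dyadic_monomial_domination (n N : ℕ) (β : ℕ → Fin n →₀ ℕ)
    (hβ : ∀ k ∈ Finset.Icc 1 (N + 1), ∀ i, Even (β k i))
    (α : Fin n →₀ ℕ)
    (hα : ∀ i, (α i : ℚ) =
      (∑ k ∈ Finset.Icc 1 N, (β k i : ℚ) / 2 ^ k) + (β (N + 1) i : ℚ) / 2 ^ N) :
    ∀ ε : ℝ, 0 < ε → ∀ a : ℝ, ∀ t ∈ Finset.Icc 1 (N + 1), ∃ M : ℝ, 0 < M ∧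
      IsSumSq (ε • (∑ k ∈ Finset.Icc 1 (N + 1), monomial (β k) (1 : ℝ))
        - a • monomial α (1 : ℝ) + M • monomial (β t) (1 : ℝ)) := by
  intro ε hε a t ht
  obtain ⟨ht1, ht2⟩ := Finset.mem_Icc.mp ht
  -- rational version of the intermediate exponents
  set Aq : ℕ → Fin n → ℚ :=
    fun j i => 2^j * (α i : ℚ) - ∑ k ∈ Finset.Icc 1 j, 2^(j-k) * (β k i : ℚ) with hAqdef
  have hrecq : ∀ j i, Aq (j+1) i = 2 * Aq j i - (β (j+1) i : ℚ) := by
    intro j i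
    simp only [hAqdef]
    rw [← Finset.insert_Icc_right_eq_Icc_add_one (by omega : 1 ≤ j+1), Finset.sum_insert (by simp)]
    have hsum : ∑ k ∈ Finset.Icc 1 j, (2:ℚ)^(j+1-k) * (β k i : ℚ)
        = 2 * ∑ k ∈ Finset.Icc 1 j, (2:ℚ)^(j-k) * (β k i : ℚ) := by
      rw [Finset.mul_sum]
      refine Finset.sum_congr rfl fun k hk => ?_
      obtain ⟨hk1, hk2⟩ := Finset.mem_Icc.mp hk
      rw [show j+1-k = (j-k)+1 by omega, pow_succ]
      ring
    rw [hsum]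
    simp only [Nat.sub_self, pow_zero, one_mul]
    ring
  have hANq : ∀ i, Aq N i = (β (N+1) i : ℚ) := by
    intro i
    simp only [hAqdef]
    rw [hα i, mul_add, Finset.mul_sum]
    have hterm : ∀ k ∈ Finset.Icc 1 N, (2:ℚ)^N * ((β k i : ℚ) / 2^k)
        = 2^(N-k) * (β k i : ℚ) := by
      intro k hk
      obtain ⟨hk1, hk2⟩ := Finset.mem_Icc.mp hk
      have h2 : (2:ℚ)^N = 2^(N-k) * 2^k := by rw [← pow_add]; congr 1; omega
      rw [h2]
      have : (2:ℚ)^k ≠ 0 := by positivity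
      field_simp
    rw [Finset.sum_congr rfl hterm]
    have : (2:ℚ)^N ≠ 0 := by positivity
    field_simp
    ring
  have hnonnegq : ∀ j, j ≤ N → ∀ i, 0 ≤ Aq j i := by
    have key : ∀ d i, 0 ≤ Aq (N - d) i := by
      intro d
      induction d with
      | zero =>
        intro i
        simp only [Nat.sub_zero]
        rw [hANq i]
        positivity
      | succ d ih =>
        intro i
        by_cases hd : N ≤ d
        · rw [show N - (d+1) = N - d by omega]; exact ih i
        · have h1 : N - d = (N - (d+1)) + 1 := by omega
          have hr := hrecq (N - (d+1)) i
          rw [← h1] at hr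
          have hb0 : (0:ℚ) ≤ (β (N - d) i : ℚ) := by positivity
          have hih := ih i
          linarith
    intro j hj i
    have := key (N - j) i
    rwa [show N - (N - j) = j by omega] at this
  -- natural-number version
  set A : ℕ → Fin n → ℕ :=
    fun j i => 2^j * α i - ∑ k ∈ Finset.Icc 1 j, 2^(j-k) * β k i with hAdef
  have hcast : ∀ j, j ≤ N → ∀ i, (A j i : ℚ) = Aq j i := by
    intro j hj i
    have h := hnonnegq j hj i
    simp only [hAqdef] at h
    have hle : ∑ k ∈ Finset.Icc 1 j, 2^(j-k) * β k i ≤ 2^j * α i := by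
      have hcq : ((∑ k ∈ Finset.Icc 1 j, 2^(j-k) * β k i : ℕ) : ℚ)
          ≤ ((2^j * α i : ℕ) : ℚ) := by push_cast; linarith
      exact_mod_cast hcq
    simp only [hAdef, hAqdef]
    rw [Nat.cast_sub hle]
    push_cast
    ring
  have hA0 : ∀ i, A 0 i = α i := by intro i; simp [hAdef]
  have hAN : ∀ i, A N i = β (N+1) i := by
    intro i
    have h := hcast N le_rfl i
    rw [hANq i] at h
    exact_mod_cast h
  have hrecn : ∀ j, j+1 ≤ N → ∀ i, A (j+1) i + β (j+1) i = 2 * A j i := by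
    intro j hj i
    have h1 := hcast (j+1) hj i
    have h2 := hcast j (by omega) i
    have h3 := hrecq j i
    have : ((A (j+1) i + β (j+1) i : ℕ) : ℚ) = ((2 * A j i : ℕ) : ℚ) := by
      push_cast
      rw [h1, h2] at *
      linarith [h3]
    exact_mod_cast this
  have hAeven : ∀ j, 1 ≤ j → j ≤ N → ∀ i, Even (A j i) := by
    intro j h1 h2 i
    obtain ⟨j', rfl⟩ : ∃ j', j = j'+1 := ⟨j-1, by omega⟩
    have h := hrecn j' h2 i
    obtain ⟨c, hc⟩ := hβ (j'+1) (Finset.mem_Icc.mpr ⟨by omega, by omega⟩) i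
    exact ⟨A j' i - c, by omega⟩
  -- halves
  set D : ℕ → Fin n → ℕ := fun j i => A j i / 2 with hDdef
  set G : ℕ → Fin n → ℕ := fun k i => β k i / 2 with hGdef
  have hDD : ∀ j, 1 ≤ j → j ≤ N → ∀ i, D j i + D j i = A j i := by
    intro j h1 h2 i
    obtain ⟨c, hc⟩ := hAeven j h1 h2 i
    simp only [hDdef]
    omega
  have hGG : ∀ k, 1 ≤ k → k ≤ N+1 → ∀ i, G k i + G k i = β k i := by
    intro k h1 h2 i
    obtain ⟨c, hc⟩ := hβ k (Finset.mem_Icc.mpr ⟨h1, h2⟩) i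
    simp only [hGdef]
    omega
  have hGD : ∀ j, 1 ≤ j → j ≤ N → ∀ i, G j i + D j i = A (j-1) i := by
    intro j h1 h2 i
    obtain ⟨j', rfl⟩ : ∃ j', j = j'+1 := ⟨j-1, by omega⟩
    have h := hrecn j' h2 i
    obtain ⟨c, hc⟩ := hβ (j'+1) (Finset.mem_Icc.mpr ⟨by omega, by omega⟩) i
    obtain ⟨e, he⟩ := hAeven (j'+1) (by omega) h2 i
    simp only [hDdef, hGdef, Nat.add_sub_cancel]
    omega
  -- Finsupp versions
  set Af : ℕ → (Fin n →₀ ℕ) := fun j => Finsupp.equivFunOnFinite.symm (A j) with hAfdef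
  set Df : ℕ → (Fin n →₀ ℕ) := fun j => Finsupp.equivFunOnFinite.symm (D j) with hDfdef
  set Gf : ℕ → (Fin n →₀ ℕ) := fun k => Finsupp.equivFunOnFinite.symm (G k) with hGfdef
  have happ : ∀ (f : Fin n → ℕ) i, (Finsupp.equivFunOnFinite.symm f) i = f i :=
    fun f i => rfl
  have hGGf : ∀ j, 1 ≤ j → j ≤ N → Gf j + Gf j = β j := by
    intro j h1 h2
    ext i
    simp only [Finsupp.add_apply, hGfdef, happ]
    exact hGG j h1 (by omega) i
  have hGDf : ∀ j, 1 ≤ j → j ≤ N → Gf j + Df j = Af (j-1) := by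
    intro j h1 h2
    ext i
    simp only [Finsupp.add_apply, hGfdef, hDfdef, hAfdef, happ]
    exact hGD j h1 h2 i
  have hDDf : ∀ j, 1 ≤ j → j ≤ N → Df j + Df j = Af j := by
    intro j h1 h2
    ext i
    simp only [Finsupp.add_apply, hDfdef, hAfdef, happ]
    exact hDD j h1 h2 i
  have hGGfN : Gf (N+1) + Gf (N+1) = β (N+1) := by
    ext i
    simp only [Finsupp.add_apply, hGfdef, happ]
    exact hGG (N+1) (by omega) le_rfl i
  have hAf0 : Af 0 = α := by
    ext i
    simp only [hAfdef, happ]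
    exact hA0 i
  have hAfN : Af N = β (N+1) := by
    ext i
    simp only [hAfdef, happ]
    exact hAN i
  -- scalars
  set M : ℝ := if t = N+1 then |chainC a (fun _ => ε) N| + 1
    else (chainC a (fun _ => ε) (t-1))^2/(4*ε) + 1 with hMdef
  have hMpos : 0 < M := by
    rw [hMdef]
    split
    · positivity
    · positivity
  set b : ℕ → ℝ := fun j => if j = t then ε + M else ε with hbdef
  have hbpos : ∀ j, 0 < b j := by
    intro j
    simp only [hbdef]
    split
    · linarith
    · exact hε
  have hCeq : ∀ j, j < t → chainC a b j = chainC a (fun _ => ε) j := by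
    intro j
    induction j with
    | zero => intro _; rfl
    | succ j ih =>
      intro hj
      rw [chainC_succ, chainC_succ, ih (by omega)]
      simp only [hbdef]
      rw [if_neg (by omega)]
  have hCnonneg : ∀ j, 1 ≤ j → 0 ≤ chainC a b j := by
    intro j h1
    obtain ⟨j', rfl⟩ : ∃ j', j = j'+1 := ⟨j-1, by omega⟩
    rw [chainC_succ]
    have := hbpos (j'+1)
    positivity
  have hCNle : chainC a b N ≤ ε + (if t = N+1 then M else 0) := by
    by_cases htN : t = N+1
    · rw [if_pos htN, hCeq N (by omega), hMdef, if_pos htN]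
      have h1 := le_abs_self (chainC a (fun _ => ε) N)
      linarith
    · rw [if_neg htN, add_zero]
      have ht2' : t ≤ N := by omega
      have hCt : chainC a b t ≤ ε := by
        obtain ⟨t', rfl⟩ : ∃ t', t = t'+1 := ⟨t-1, by omega⟩
        rw [chainC_succ, hCeq t' (by omega)]
        simp only [hbdef]
        simp only [eq_self_iff_true, if_true]
        rw [hMdef, if_neg htN]
        simp only [Nat.add_sub_cancel]
        set K := (chainC a (fun _ => ε) t')^2 with hKdef
        have hK : 0 ≤ K := by rw [hKdef]; positivity
        rw [div_le_iff₀ (by positivity)]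
        have hfld : ε * (4 * (K/(4*ε))) = K := by field_simp
        nlinarith
      have hprop : ∀ j, t ≤ j → j ≤ N → chainC a b j ≤ ε := by
        intro j hj
        induction j, hj using Nat.le_induction with
        | base => intro _; exact hCt
        | succ m hm ih =>
          intro hmN
          rw [chainC_succ]
          simp only [hbdef]
          rw [if_neg (by omega)]
          have h0 : 0 ≤ chainC a b m := hCnonneg m (by omega)
          have h1 : chainC a b m ≤ ε := ih (by omega)
          rw [div_le_iff₀ (by positivity)]
          nlinarith
      exact hprop N ht2' le_rfl
  set L : ℝ := ε + (if t = N+1 then M else 0) - chainC a b N with hLdef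
  have hL : 0 ≤ L := by rw [hLdef]; linarith
  refine ⟨M, hMpos, ?_⟩
  have htel := telescope N β Af Df Gf a b hbpos hGGf hGDf hDDf N le_rfl
  rw [hAf0, hAfN] at htel
  set q := Real.sqrt L • monomial (Gf (N+1)) (1:ℝ) with hqdef
  have hq : q * q = L • monomial (β (N+1)) (1:ℝ) := by
    rw [hqdef, smul_mul_smul_comm, Real.mul_self_sqrt hL, monomial_mul, one_mul, hGGfN]
  have hfinal : ε • (∑ k ∈ Finset.Icc 1 (N + 1), monomial (β k) (1 : ℝ))
        - a • monomial α (1 : ℝ) + M • monomial (β t) (1 : ℝ)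
      = (∑ j ∈ Finset.Icc 1 N,
        (Real.sqrt (b j) • monomial (Gf j) (1:ℝ)
          - (chainC a b (j-1) / (2 * Real.sqrt (b j))) • monomial (Df j) (1:ℝ)) *
        (Real.sqrt (b j) • monomial (Gf j) (1:ℝ)
          - (chainC a b (j-1) / (2 * Real.sqrt (b j))) • monomial (Df j) (1:ℝ)))
        + q * q := by
    rw [htel, hq, Finset.smul_sum]
    rw [← Finset.insert_Icc_right_eq_Icc_add_one (by omega : 1 ≤ N+1), Finset.sum_insert (by simp)]
    have hbsplit : ∑ j ∈ Finset.Icc 1 N, b j • monomial (β j) (1:ℝ)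
        = (∑ j ∈ Finset.Icc 1 N, ε • monomial (β j) (1:ℝ))
          + (if t ∈ Finset.Icc 1 N then M • monomial (β t) (1:ℝ) else 0) := by
      rw [← Finset.sum_ite_eq' (Finset.Icc 1 N) t (fun j => M • monomial (β j) (1:ℝ)),
        ← Finset.sum_add_distrib]
      refine Finset.sum_congr rfl fun j hj => ?_
      simp only [hbdef]
      by_cases hjt : j = t
      · rw [if_pos hjt, if_pos hjt, hjt, add_smul]
      · rw [if_neg hjt, if_neg hjt, add_zero]
    rw [hbsplit]
    by_cases htN : t = N+1
    · rw [if_neg (by simp only [Finset.mem_Icc]; omega), hLdef, if_pos htN, htN]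
      module
    · rw [if_pos (Finset.mem_Icc.mpr ⟨ht1, by omega⟩), hLdef, if_neg htN]
      module
  rw [hfinal]
  refine (IsSumSq.sum_mul_self _ _).add ?_
  simpa using IsSumSq.sq_add q 0 IsSumSq.zero
end

section
/- Let f ∈ R[x_1,...,x_n] with Newton diagram Γ(f) equal to the simplex {α ∈ Z_{≥0}^n : α_1 + ... + α_n = 2} (equivalently, f has no constant or linear terms and its quadratic part involves all variables appropriately). If the quadratic part f_2 = f_Γ is positive definite, then every integer point of the Newton polyhedron conv Δ(f_Γ) belongs to the bisectional convex hull bconv Δ_E(f_Γ); in particular f has a regular Newton polyhedron. -/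
/-!
Evaluating the positive definite form `f_Γ` at the unit vectors shows that every `xᵢ²` occurs in
`f` with positive coefficient. The face of `conv Δ(f)` of minimal total degree is compact, so it
lies in `Γ(f)`, which puts `supp f` in total degree `≥ 2`; hence `conv Δ(f)` is
`{x ≥ 0 : Σ xᵢ ≥ 2}`, whose vertices are the `2eᵢ` and whose only maximal compact face is `Γ(f)`.
An integer point `α` of total degree `≥ 2` is the midpoint of two nonzero even vectors, obtained by
rounding the odd coordinates of `α` up at one index and down at the others and vice versa; each
of them dominates some `2eᵢ ∈ Δ_E(f_Γ)`, so `α ∈ bconv Δ_E(f_Γ)`.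
-/

open MvPolynomial

noncomputable section
attribute [local instance] Classical.propDecidable

variable {n : ℕ}

def degSimplex (n : ℕ) (c : ℝ) : Set (Fin n → ℝ) := {x | (∀ i, 0 ≤ x i) ∧ ∑ i, x i = c}

def degSuperlevel (n : ℕ) (c : ℝ) : Set (Fin n → ℝ) := {x | (∀ i, 0 ≤ x i) ∧ c ≤ ∑ i, x i}

lemma sum_expPt (α : Fin n →₀ ℕ) : ∑ i, expPt α i = ((∑ i, α i : ℕ) : ℝ) := by
  simp [expPt]

lemma expPt_mem_degSuperlevel {α : Fin n →₀ ℕ} {d : ℕ} :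
    expPt α ∈ degSuperlevel n d ↔ d ≤ ∑ i, α i := by
  simp only [degSuperlevel, Set.mem_ofPred_eq, sum_expPt, Nat.cast_le, and_iff_right_iff_imp]
  exact fun _ i => Nat.cast_nonneg _

lemma expPt_single_mem_degSimplex (i : Fin n) (d : ℕ) :
    expPt (Finsupp.single i d) ∈ degSimplex n d := by
  refine ⟨fun j => by simp [expPt], ?_⟩
  simp [sum_expPt, Finsupp.single_apply]

lemma coeff_facePart (f : MvPolynomial (Fin n) ℝ) (γ : Set (Fin n → ℝ)) (β : Fin n →₀ ℕ) :
    coeff β (facePart f γ) = if expPt β ∈ γ then coeff β f else 0 := by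
  by_cases hβ : β ∈ f.support <;> by_cases hγ : expPt β ∈ γ <;>
    simp_all [facePart, coeff_sum, coeff_monomial]

lemma expPt_mem_of_mem_support_facePart {f : MvPolynomial (Fin n) ℝ} {γ : Set (Fin n → ℝ)}
    {β : Fin n →₀ ℕ} (hβ : β ∈ (facePart f γ).support) : expPt β ∈ γ := by
  by_contra h
  simp [coeff_facePart, h] at hβ

lemma eq_single_sum_of_forall_ne {β : Fin n →₀ ℕ} {i : Fin n} (h : ∀ j, j ≠ i → β j = 0) :
    β = Finsupp.single i (∑ j, β j) := by
  rw [Finset.sum_eq_single i (fun j _ hj => h j hj) (by simp)]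
  ext j
  rcases eq_or_ne j i with rfl | hj
  · simp
  · simp [h j hj, Ne.symm hj]

lemma exists_even_add_eq_two_mul {α : Fin n →₀ ℕ} (hα : 2 ≤ ∑ j, α j) :
    ∃ g₁ g₂ : Fin n →₀ ℕ, (∀ j, Even (g₁ j)) ∧ (∀ j, Even (g₂ j)) ∧ g₁ ≠ 0 ∧ g₂ ≠ 0 ∧
      ∀ j, g₁ j + g₂ j = 2 * α j := by
  obtain ⟨i, hi⟩ : ∃ i, α i ≠ 0 := by
    by_contra! h
    simp [h] at hα
  -- round the odd coordinates of `α` up at `i` and down elsewhere, resp. the other way round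
  let g₁ : Fin n →₀ ℕ := Finsupp.equivFunOnFinite.symm fun j =>
    if j = i then α j + α j % 2 else α j - α j % 2
  let g₂ : Fin n →₀ ℕ := Finsupp.equivFunOnFinite.symm fun j =>
    if j = i then α j - α j % 2 else α j + α j % 2
  refine ⟨g₁, g₂, fun j => ?_, fun j => ?_, fun h => ?_, fun h => ?_, fun j => ?_⟩
  · simp only [g₁, Finsupp.coe_equivFunOnFinite_symm, Nat.even_iff]; split_ifs <;> omega
  · simp only [g₂, Finsupp.coe_equivFunOnFinite_symm, Nat.even_iff]; split_ifs <;> omega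
  · have := DFunLike.congr_fun h i
    simp [g₁] at this
    omega
  · have hzero : ∀ j, j ≠ i → α j = 0 := fun j hj => by
      have := DFunLike.congr_fun h j
      simp [g₂, hj] at this
      exact this.1
    have := DFunLike.congr_fun h i
    simp [g₂] at this
    rw [Finset.sum_eq_single i (fun j _ hj => hzero j hj) (by simp)] at hα
    omega
  · simp only [g₁, g₂, Finsupp.coe_equivFunOnFinite_symm]; split_ifs <;> omega

lemma memBconv_of_add_eq_two_mul {E : Set (Fin n → ℝ)} {α g₁ g₂ : Fin n →₀ ℕ}
    (hg₁ : expPt g₁ ∈ E ∧ ∀ j, Even (g₁ j)) (hg₂ : expPt g₂ ∈ E ∧ ∀ j, Even (g₂ j))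
    (hα : ∀ j, g₁ j + g₂ j = 2 * α j) : MemBconv E α := by
  refine ⟨2, 1, ![g₁, g₂], fun _ _ => true, two_pos, fun s => ?_, fun s => ?_, ?_,
    fun _ => ⟨0, rfl⟩, fun j => ?_⟩
  · fin_cases s <;> assumption
  · simp
  · norm_num
  · have : (g₁ j : ℚ) + g₂ j = 2 * α j := by exact_mod_cast hα j
    simp only [Fin.sum_univ_two, Fin.sum_univ_one, Matrix.cons_val_zero, Matrix.cons_val_one]
    norm_num
    linarith

lemma expPt_mem_deltaESet {p : MvPolynomial (Fin n) ℝ}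
    (hp : ∀ i, Finsupp.single i 2 ∈ p.support) {g : Fin n →₀ ℕ} (hg : ∀ j, Even (g j))
    (hg0 : g ≠ 0) : expPt g ∈ DeltaESet p := by
  obtain ⟨i, hi⟩ : ∃ i, g i ≠ 0 := by
    by_contra! h
    exact hg0 (Finsupp.ext h)
  have h2 : 2 ≤ g i := by obtain ⟨k, hk⟩ := hg i; omega
  refine ⟨Finsupp.single i 2, hp i, fun j => ?_, fun j => ?_⟩
  · rcases eq_or_ne j i with rfl | hj <;> simp [*]
  · rcases eq_or_ne j i with rfl | hj
    · simpa [expPt] using (Nat.cast_le (α := ℝ)).2 h2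
    · simp [Ne.symm hj, expPt]

lemma memBconv_deltaESet_of_two_le {p : MvPolynomial (Fin n) ℝ}
    (hp : ∀ i, Finsupp.single i 2 ∈ p.support) {α : Fin n →₀ ℕ} (hα : 2 ≤ ∑ j, α j) :
    MemBconv (DeltaESet p) α := by
  obtain ⟨g₁, g₂, he₁, he₂, h₁, h₂, hsum⟩ := exists_even_add_eq_two_mul hα
  exact memBconv_of_add_eq_two_mul ⟨expPt_mem_deltaESet hp he₁ h₁, he₁⟩
    ⟨expPt_mem_deltaESet hp he₂ h₂, he₂⟩ hsum

lemma convex_degSuperlevel (n : ℕ) (c : ℝ) : Convex ℝ (degSuperlevel n c) := by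
  rintro x ⟨hx0, hx⟩ y ⟨hy0, hy⟩ a b ha hb hab
  refine ⟨fun i => ?_, ?_⟩
  · have := hx0 i; have := hy0 i
    simp only [Pi.add_apply, Pi.smul_apply, smul_eq_mul]
    positivity
  · simp only [Pi.add_apply, Pi.smul_apply, smul_eq_mul, Finset.sum_add_distrib, ← Finset.mul_sum]
    rw [← one_mul c, ← hab]
    linarith [mul_le_mul_of_nonneg_left hx ha, mul_le_mul_of_nonneg_left hy hb]

lemma newtonPolyhedron_subset_degSuperlevel {f : MvPolynomial (Fin n) ℝ} {c : ℝ}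
    (hf : ∀ β ∈ f.support, c ≤ ∑ j, (β j : ℝ)) : NewtonPolyhedron f ⊆ degSuperlevel n c := by
  refine convexHull_min ?_ (convex_degSuperlevel n c)
  rintro x ⟨β, hβ, hle⟩
  exact ⟨fun i => (Nat.cast_nonneg _).trans (hle i),
    (hf β hβ).trans (Finset.sum_le_sum fun j _ => hle j)⟩

lemma degSuperlevel_subset_newtonPolyhedron {f : MvPolynomial (Fin n) ℝ} {d : ℕ} (hd : 0 < d)
    (hf : ∀ i, Finsupp.single i d ∈ f.support) : degSuperlevel n d ⊆ NewtonPolyhedron f := by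
  rintro x ⟨hx0, hxd⟩
  set S := ∑ i, x i
  have hS : 0 < S := lt_of_lt_of_le (by exact_mod_cast hd) hxd
  -- `x` is the convex combination of the points `S • eᵢ ∈ Δ(f)` with weights `xᵢ / S`
  have hvert : ∀ i, Pi.single i S ∈ DeltaSet f := fun i => ⟨_, hf i, fun j => by
    rcases eq_or_ne j i with rfl | hj
    · simpa using hxd
    · simp [hj]⟩
  have hx : ∑ i, (x i / S) • Pi.single i S = x := by
    conv_rhs => rw [← Finset.univ_sum_single x]
    refine Finset.sum_congr rfl fun i _ => ?_
    rw [← Pi.single_smul', smul_eq_mul, div_mul_cancel₀ _ hS.ne']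
  rw [← hx]
  refine (convex_convexHull ℝ _).sum_mem (fun i _ => div_nonneg (hx0 i) hS.le) ?_
    fun i _ => subset_convexHull ℝ _ (hvert i)
  rw [← Finset.sum_div, div_self hS.ne']

lemma convexHull_inter_level_eq {E : Type*} [AddCommGroup E] [Module ℝ E]
    (ℓ : E →ₗ[ℝ] ℝ) {s : Set E} {c : ℝ} (hs : ∀ x ∈ s, c ≤ ℓ x) :
    convexHull ℝ s ∩ {x | ℓ x = c} = convexHull ℝ (s ∩ {x | ℓ x = c}) := by
  refine Set.Subset.antisymm ?_ (convexHull_min (Set.inter_subset_inter_left _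
    (subset_convexHull ℝ _)) ((convex_convexHull ℝ _).inter (convex_hyperplane ℓ.isLinear c)))
  have hge : ∀ x ∈ convexHull ℝ s, c ≤ ℓ x :=
    fun x hx => convexHull_min hs (convex_halfSpace_ge ℓ.isLinear c) hx
  -- a convex combination lies on the supporting hyperplane only if its (weighted) summands do
  suffices convexHull ℝ s ⊆
      {x | x ∈ convexHull ℝ s ∧ (ℓ x = c → x ∈ convexHull ℝ (s ∩ {x | ℓ x = c}))} from
    fun x ⟨hx, hxc⟩ => (this hx).2 hxc
  refine convexHull_min (fun x hx => ⟨subset_convexHull ℝ _ hx,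
    fun hxc => subset_convexHull ℝ _ ⟨hx, hxc⟩⟩) ?_
  rintro x ⟨hx, hxc⟩ y ⟨hy, hyc⟩ a b ha hb hab
  refine ⟨convex_convexHull ℝ _ hx hy ha hb hab, fun hc => ?_⟩
  have hx' : 0 ≤ a * (ℓ x - c) := mul_nonneg ha (sub_nonneg.2 (hge x hx))
  have hy' : 0 ≤ b * (ℓ y - c) := mul_nonneg hb (sub_nonneg.2 (hge y hy))
  have hsum : a * (ℓ x - c) + b * (ℓ y - c) = 0 := by
    simp only [map_add, map_smul, smul_eq_mul] at hc
    linear_combination hc - c * hab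
  rcases ha.eq_or_lt with rfl | ha
  · simp_all
  rcases hb.eq_or_lt with rfl | hb
  · simp_all
  have hxc' : ℓ x = c := by nlinarith
  have hyc' : ℓ y = c := by nlinarith
  exact convex_convexHull ℝ _ (hxc hxc') (hyc hyc') ha.le hb.le hab

lemma isCompact_newtonPolyhedron_inter_level {f : MvPolynomial (Fin n) ℝ} {m : ℝ}
    (hf : ∀ β ∈ f.support, m ≤ ∑ j, (β j : ℝ)) :
    IsCompact {x ∈ NewtonPolyhedron f | ∑ i, x i = m} := by
  let ℓ : (Fin n → ℝ) →ₗ[ℝ] ℝ := ∑ i, LinearMap.proj i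
  have hℓ : ∀ x, ℓ x = ∑ i, x i := fun x => by simp [ℓ]
  have hΔ : ∀ x ∈ DeltaSet f, m ≤ ℓ x := by
    rintro x ⟨β, hβ, hle⟩
    exact hℓ x ▸ (hf β hβ).trans (Finset.sum_le_sum fun j _ => hle j)
  -- on the level `m` of the total degree, `Δ(f)` consists of exponents of `f` only
  have hfin : (DeltaSet f ∩ {x | ℓ x = m}).Finite := by
    refine (f.support.finite_toSet.image expPt).subset ?_
    rintro x ⟨⟨β, hβ, hle⟩, hxm⟩
    refine ⟨β, hβ, funext fun j => ?_⟩
    have := (Finset.sum_eq_sum_iff_of_le fun j _ => hle j).1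
      (le_antisymm (Finset.sum_le_sum fun j _ => hle j) (hℓ x ▸ hxm ▸ hf β hβ))
    exact this j (Finset.mem_univ j)
  have hface : {x ∈ NewtonPolyhedron f | ∑ i, x i = m} =
      convexHull ℝ (DeltaSet f) ∩ {x | ℓ x = m} := by
    simp only [hℓ]; rfl
  rw [hface, convexHull_inter_level_eq ℓ hΔ]
  exact hfin.isCompact_convexHull ℝ

lemma isCompactFaceOf_newtonPolyhedron_inter_level [Nonempty (Fin n)]
    {f : MvPolynomial (Fin n) ℝ} {m : ℝ} (hf : ∀ β ∈ f.support, m ≤ ∑ j, (β j : ℝ))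
    {β₀ : Fin n →₀ ℕ} (hβ₀ : β₀ ∈ f.support) (hβ₀m : ∑ j, (β₀ j : ℝ) = m) :
    IsCompactFaceOf (NewtonPolyhedron f) {x ∈ NewtonPolyhedron f | ∑ i, x i = m} := by
  refine ⟨⟨⟨expPt β₀, subset_convexHull ℝ _ ⟨β₀, hβ₀, fun _ => le_rfl⟩, hβ₀m⟩, 1, m,
    one_ne_zero, fun x hx => ?_, by simp⟩, isCompact_newtonPolyhedron_inter_level hf⟩
  simpa using (newtonPolyhedron_subset_degSuperlevel hf hx).2

lemma two_le_degree_of_newtonDiagram_eq {f : MvPolynomial (Fin n) ℝ}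
    (hf0 : eval (0 : Fin n → ℝ) f = 0) (hΓ : NewtonDiagram f = degSimplex n 2) :
    ∀ β ∈ f.support, (2 : ℝ) ≤ ∑ j, (β j : ℝ) := by
  intro β hβ
  obtain ⟨β₀, hβ₀, hmin⟩ :=
    f.support.exists_min_image (fun β => ∑ j, (β j : ℝ)) ⟨β, hβ⟩
  rcases isEmpty_or_nonempty (Fin n) with hn | hn
  · rw [Subsingleton.elim β₀ 0, mem_support_iff, ← constantCoeff_eq, ← eval_zero] at hβ₀
    exact absurd hf0 hβ₀
  -- the face of minimal total degree is compact, hence lies in `Γ(f)`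
  have hface := isCompactFaceOf_newtonPolyhedron_inter_level hmin hβ₀ rfl
  have hmem : expPt β₀ ∈ NewtonDiagram f :=
    Set.mem_biUnion hface ⟨subset_convexHull ℝ _ ⟨β₀, hβ₀, fun _ => le_rfl⟩, rfl⟩
  rw [hΓ] at hmem
  exact hmem.2.symm.le.trans (hmin β hβ)

lemma eq_zero_of_add_mem_of_sub_mem_of_mem_extremePoints {E : Type*} [AddCommGroup E]
    [Module ℝ E] {A : Set E} {x v : E} (hx : x ∈ A.extremePoints ℝ) (h₁ : x + v ∈ A)
    (h₂ : x - v ∈ A) : v = 0 := by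
  have hseg : x ∈ openSegment ℝ (x + v) (x - v) :=
    ⟨1 / 2, 1 / 2, by norm_num, by norm_num, by norm_num, by module⟩
  simpa using hx.2 h₁ h₂ hseg

section ExtremePoints

variable {d : ℕ} {α : Fin n →₀ ℕ}

lemma eq_zero_of_expPt_mem_extremePoints (hα : expPt α ∈ (degSuperlevel n d).extremePoints ℝ)
    {v : Fin n → ℝ} (hplus : ∀ i, 0 ≤ (α i : ℝ) + v i) (hminus : ∀ i, 0 ≤ (α i : ℝ) - v i)
    (hsum : (d : ℝ) + |∑ i, v i| ≤ ∑ i, (α i : ℝ)) : v = 0 := by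
  refine eq_zero_of_add_mem_of_sub_mem_of_mem_extremePoints hα ⟨hplus, ?_⟩ ⟨hminus, ?_⟩ <;>
    simp only [Pi.add_apply, Pi.sub_apply, Finset.sum_add_distrib, Finset.sum_sub_distrib,
      expPt] <;>
    linarith [le_abs_self (∑ i, v i), neg_abs_le (∑ i, v i)]

lemma sum_eq_of_expPt_mem_extremePoints (hα : expPt α ∈ (degSuperlevel n d).extremePoints ℝ) :
    ∑ i, α i = d := by
  have hαd : d ≤ ∑ i, α i := expPt_mem_degSuperlevel.1 hα.1
  by_contra hne
  obtain ⟨j, hj⟩ : ∃ j, α j ≠ 0 := by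
    by_contra! h
    simp_all
  have hsucc : ((d + 1 : ℕ) : ℝ) ≤ ∑ i, (α i : ℝ) := by
    exact_mod_cast (show d + 1 ≤ ∑ i, α i by omega)
  -- a surplus of degree lets `α` move back and forth along the `j`-th axis
  have := eq_zero_of_expPt_mem_extremePoints hα (v := Pi.single j 1) (fun i => ?_) (fun i => ?_)
    (by simpa using hsucc)
  · simpa using congr_fun this j
  · rcases eq_or_ne i j with rfl | hi
    · simp; positivity
    · simp [hi]
  · rcases eq_or_ne i j with rfl | hi
    · simpa using Nat.one_le_iff_ne_zero.2 hj
    · simp [hi]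

lemma eq_of_expPt_mem_extremePoints (hα : expPt α ∈ (degSuperlevel n d).extremePoints ℝ)
    {j k : Fin n} (hj : α j ≠ 0) (hk : α k ≠ 0) : j = k := by
  by_contra hjk
  -- otherwise `α` can move back and forth along `eⱼ - eₖ` at constant degree
  have := eq_zero_of_expPt_mem_extremePoints hα (v := Pi.single j 1 - Pi.single k 1)
    (fun i => ?_) (fun i => ?_) ?_
  · simpa [Pi.single_apply, Ne.symm hjk] using congr_fun this j
  · by_cases hij : i = j
    · subst hij; simp [hjk]; positivity
    · by_cases hik : i = k
      · subst hik; simpa [hij] using Nat.one_le_iff_ne_zero.2 hk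
      · simp [hij, hik]
  · by_cases hij : i = j
    · subst hij; simpa [hjk] using Nat.one_le_iff_ne_zero.2 hj
    · by_cases hik : i = k
      · subst hik; simp [hij]; positivity
      · simp [hij, hik]
  · simpa [Finset.sum_sub_distrib] using
      (Nat.cast_le (α := ℝ)).2 (expPt_mem_degSuperlevel.1 hα.1)

lemma exists_eq_single_of_expPt_mem_extremePoints (hd : 0 < d)
    (hα : expPt α ∈ (degSuperlevel n d).extremePoints ℝ) : ∃ i, α = Finsupp.single i d := by
  have hsum := sum_eq_of_expPt_mem_extremePoints hα
  obtain ⟨i, hi⟩ : ∃ i, α i ≠ 0 := by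
    by_contra! h
    simp [h] at hsum
    omega
  refine ⟨i, hsum ▸ eq_single_sum_of_forall_ne fun j hj => ?_⟩
  by_contra h
  exact hj (eq_of_expPt_mem_extremePoints hα h hi)

end ExtremePoints

lemma eval_piSingle_one_eq_coeff {p : MvPolynomial (Fin n) ℝ} {d : ℕ}
    (hp : ∀ β ∈ p.support, ∑ j, β j = d) (i : Fin n) :
    eval (Pi.single i 1) p = coeff (Finsupp.single i d) p := by
  rw [eval_eq', Finset.sum_eq_single (Finsupp.single i d)]
  · rw [Finset.prod_eq_one fun j _ => ?_, mul_one]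
    rcases eq_or_ne j i with rfl | hj <;> simp [*]
  · intro β hβ hne
    obtain ⟨j, hj, hβj⟩ : ∃ j, j ≠ i ∧ β j ≠ 0 := by
      by_contra! h
      exact hne (hp β hβ ▸ eq_single_sum_of_forall_ne h)
    rw [Finset.prod_eq_zero (Finset.mem_univ j) (by simp [hj, hβj]), mul_zero]
  · intro h
    rw [notMem_support_iff.1 h, zero_mul]

lemma sum_eq_of_mem_support_facePart_degSimplex {f : MvPolynomial (Fin n) ℝ} {c : ℝ}
    {β : Fin n →₀ ℕ} (hβ : β ∈ (facePart f (degSimplex n c)).support) :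
    ∑ j, (β j : ℝ) = c :=
  (expPt_mem_of_mem_support_facePart hβ).2

lemma single_mem_support_facePart_degSimplex {f : MvPolynomial (Fin n) ℝ} {i : Fin n} {d : ℕ}
    (hf : Finsupp.single i d ∈ f.support) :
    Finsupp.single i d ∈ (facePart f (degSimplex n d)).support := by
  rwa [mem_support_iff, coeff_facePart, if_pos (expPt_single_mem_degSimplex i d),
    ← mem_support_iff]

lemma coeff_single_pos_of_posDef {f : MvPolynomial (Fin n) ℝ} {d : ℕ}
    (hpd : ∀ x : Fin n → ℝ, x ≠ 0 → 0 < eval x (facePart f (degSimplex n d))) (i : Fin n) :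
    0 < coeff (Finsupp.single i d) f := by
  have hdeg : ∀ β ∈ (facePart f (degSimplex n d)).support, ∑ j, β j = d := fun β hβ => by
    exact_mod_cast sum_eq_of_mem_support_facePart_degSimplex hβ
  have := hpd (Pi.single i 1) (by simp)
  rwa [eval_piSingle_one_eq_coeff hdeg, coeff_facePart,
    if_pos (expPt_single_mem_degSimplex i d)] at this

lemma memBconv_of_expPt_mem_convexHull_facePart {f : MvPolynomial (Fin n) ℝ}
    (hs : ∀ i, Finsupp.single i 2 ∈ f.support) {α : Fin n →₀ ℕ}
    (hα : expPt α ∈ convexHull ℝ (DeltaSet (facePart f (degSimplex n 2)))) :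
    MemBconv (DeltaESet (facePart f (degSimplex n 2))) α := by
  refine memBconv_deltaESet_of_two_le (fun i => single_mem_support_facePart_degSimplex (hs i)) ?_
  have := newtonPolyhedron_subset_degSuperlevel
    (fun β hβ => (sum_eq_of_mem_support_facePart_degSimplex hβ).ge) hα
  exact expPt_mem_degSuperlevel.1 (by simpa using this)

lemma newtonPolyhedron_eq_degSuperlevel {f : MvPolynomial (Fin n) ℝ} {d : ℕ} (hd : 0 < d)
    (hdeg : ∀ β ∈ f.support, (d : ℝ) ≤ ∑ j, (β j : ℝ))
    (hs : ∀ i, Finsupp.single i d ∈ f.support) : NewtonPolyhedron f = degSuperlevel n d :=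
  (newtonPolyhedron_subset_degSuperlevel hdeg).antisymm
    (degSuperlevel_subset_newtonPolyhedron hd hs)

lemma isMaximalFace_eq_degSimplex {f : MvPolynomial (Fin n) ℝ}
    (hΓ : NewtonDiagram f = degSimplex n 2) (hdeg : ∀ β ∈ f.support, (2 : ℝ) ≤ ∑ j, (β j : ℝ))
    (hs : ∀ i, Finsupp.single i 2 ∈ f.support) {γ : Set (Fin n → ℝ)} (hγ : IsMaximalFace f γ) :
    γ = degSimplex n 2 := by
  have hsub : γ ⊆ degSimplex n 2 := hΓ ▸ fun x hx => Set.mem_biUnion hγ.1 hx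
  obtain ⟨x, hx⟩ := hγ.1.1.1
  have hn : Nonempty (Fin n) := by
    by_contra h
    simpa [not_nonempty_iff.1 h] using (hsub hx).2
  have hface : {x ∈ NewtonPolyhedron f | ∑ i, x i = 2} = degSimplex n 2 := by
    rw [newtonPolyhedron_eq_degSuperlevel (d := 2) two_pos (by simpa using hdeg) hs]
    ext x
    simp only [Nat.cast_ofNat]
    exact ⟨fun ⟨⟨hx0, _⟩, hx2⟩ => ⟨hx0, hx2⟩, fun ⟨hx0, hx2⟩ => ⟨⟨hx0, hx2.ge⟩, hx2⟩⟩
  have := isCompactFaceOf_newtonPolyhedron_inter_level hdeg (hs hn.some)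
    (by simpa [expPt] using (expPt_single_mem_degSimplex hn.some 2).2)
  exact (hγ.2 _ (hface ▸ this) hsub).symm

/-- If the Newton diagram of `f` is the standard simplex `{α ≥ 0 : Σ αᵢ = 2}` and the quadratic
part `f_Γ` is positive definite, then every integer point of `conv Δ(f_Γ)` belongs to
`bconv Δ_E(f_Γ)`, and `f` has a regular Newton polyhedron. -/
theorem regular_of_posdef_quadratic {n : ℕ} (f : MvPolynomial (Fin n) ℝ)
    (hf0 : MvPolynomial.eval (0 : Fin n → ℝ) f = 0)
    (hΓ : NewtonDiagram f = {x : Fin n → ℝ | (∀ i, 0 ≤ x i) ∧ ∑ i, x i = 2})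
    (hpd : ∀ x : Fin n → ℝ, x ≠ 0 →
      0 < MvPolynomial.eval x (facePart f (NewtonDiagram f))) :
    (∀ α : Fin n →₀ ℕ,
      expPt α ∈ convexHull ℝ (DeltaSet (facePart f (NewtonDiagram f))) →
      MemBconv (DeltaESet (facePart f (NewtonDiagram f))) α) ∧
    RegularNewtonPolyhedron f := by
  change NewtonDiagram f = degSimplex n 2 at hΓ
  rw [hΓ] at hpd ⊢
  have hpos := coeff_single_pos_of_posDef (d := 2) (by simpa using hpd)
  have hs : ∀ i, Finsupp.single i 2 ∈ f.support := fun i => mem_support_iff.2 (hpos i).ne'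
  have hdeg := two_le_degree_of_newtonDiagram_eq hf0 hΓ
  have hquad := fun α => memBconv_of_expPt_mem_convexHull_facePart (α := α) hs
  refine ⟨hquad, fun α hα => ?_, fun γ hγ α _ hα _ _ => ?_⟩
  · rw [newtonPolyhedron_eq_degSuperlevel (d := 2) two_pos (by simpa using hdeg) hs] at hα
    obtain ⟨i, rfl⟩ := exists_eq_single_of_expPt_mem_extremePoints two_pos hα
    refine ⟨fun j => ?_, hpos i⟩
    rcases eq_or_ne j i with rfl | hj <;> simp [*]
  · rw [isMaximalFace_eq_degSimplex hΓ hdeg hs hγ] at hα ⊢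
    exact hquad α hα

end
end

section
/- Let Δ_E ⊂ Z_{≥0}^n be a union of sets of the form α + R_{≥0}^n with α even. Then Δ_E ∩ Z^n ⊆ bconv Δ_E ⊆ conv(Δ_E) ∩ Z^n, where bconv Δ_E is the bisectional convex hull. -/
/-!
An integer point `α` of `Δ_E` is the midpoint of its two even neighbours `α ± (α mod 2)`
(coordinatewise); both still lie in `Δ_E`, because every generator `β ≤ α` is even and hence
`β ≤ α - (α mod 2)`. This is a dyadic combination with the single digit `1/2`. Conversely, a
dyadic combination with positive weights summing to `1` is a convex combination.
-/

open Finset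

/-- `α` is a binary (dyadic) convex combination with full digits of even points of `E`. -/
def MemBconvNat {n : ℕ} (E : Set (Fin n → ℕ)) (α : Fin n → ℕ) : Prop :=
  ∃ (t N : ℕ) (A : Fin t → Fin n → ℕ) (δ : Fin t → Fin N → Bool),
    0 < t ∧
    (∀ s, A s ∈ E ∧ ∀ i, Even (A s i)) ∧
    (∀ s : Fin t, 0 < ∑ k : Fin N, (if δ s k then ((2 : ℚ) ^ (k.1 + 1))⁻¹ else 0)) ∧
    (∑ s : Fin t, ∑ k : Fin N, (if δ s k then ((2 : ℚ) ^ (k.1 + 1))⁻¹ else 0)) = 1 ∧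
    (∀ k : Fin N, ∃ s, δ s k = true) ∧
    (∀ i, (α i : ℚ) = ∑ s : Fin t,
      (∑ k : Fin N, (if δ s k then ((2 : ℚ) ^ (k.1 + 1))⁻¹ else 0)) * (A s i : ℚ))

def dyadicOfDigits {N : ℕ} (d : Fin N → Bool) : ℚ :=
  ∑ k : Fin N, if d k then ((2 : ℚ) ^ (k.1 + 1))⁻¹ else 0

section

variable {n : ℕ} {E : Set (Fin n → ℕ)}

lemma memBconvNat_of_midpoint {α β γ : Fin n → ℕ}
    (hβ : β ∈ E) (hγ : γ ∈ E) (hβ_even : ∀ i, Even (β i)) (hγ_even : ∀ i, Even (γ i))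
    (hmid : ∀ i, 2 * α i = β i + γ i) : MemBconvNat E α := by
  refine ⟨2, 1, ![β, γ], fun _ _ => true, two_pos, ?_, ?_, ?_, fun _ => ⟨0, rfl⟩, ?_⟩
  · intro s
    fin_cases s
    exacts [⟨hβ, hβ_even⟩, ⟨hγ, hγ_even⟩]
  · intro s
    norm_num
  · norm_num [Fin.sum_univ_two]
  · intro i
    have h : (2 * α i : ℚ) = β i + γ i := by exact_mod_cast hmid i
    norm_num [Fin.sum_univ_two]
    linarith

lemma MemBconvNat.cast_mem_convexHull {α : Fin n → ℕ} (hα : MemBconvNat E α) :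
    (fun i => (α i : ℝ)) ∈ convexHull ℝ ((fun (β : Fin n → ℕ) (i : Fin n) => (β i : ℝ)) '' E) := by
  obtain ⟨t, N, A, δ, -, hA, hpos, hsum, -, hcomb⟩ := hα
  set w : Fin t → ℝ := fun s => (dyadicOfDigits (δ s) : ℝ)
  have hw_sum : ∑ s, w s = 1 := by
    simp only [w, ← Rat.cast_sum, dyadicOfDigits, hsum, Rat.cast_one]
  have hα_eq : (fun i => (α i : ℝ)) = univ.centerMass w (fun s i => (A s i : ℝ)) := by
    rw [centerMass_eq_of_sum_1 _ _ hw_sum]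
    funext i
    simp only [Finset.sum_apply, Pi.smul_apply, smul_eq_mul, w, dyadicOfDigits]
    exact_mod_cast hcomb i
  rw [hα_eq]
  exact centerMass_mem_convexHull _ (fun s _ => Rat.cast_nonneg.mpr (hpos s).le)
    (hw_sum ▸ one_pos) (fun s _ => ⟨A s, (hA s).1, rfl⟩)

end

/-- If `Δ_E ⊆ ℤ₊ⁿ` is a union of translated positive orthants `α + ℝ₊ⁿ` with `α` even, then
`Δ_E ∩ ℤⁿ ⊆ bconv Δ_E ⊆ conv(Δ_E) ∩ ℤⁿ`. -/
theorem bconv_between (n : ℕ) (ΔE : Set (Fin n → ℕ))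
    (hΔE : ∃ S : Set (Fin n → ℕ), (∀ β ∈ S, ∀ i, Even (β i)) ∧
      ΔE = {γ | ∃ β ∈ S, ∀ i, β i ≤ γ i}) :
    (∀ α ∈ ΔE, MemBconvNat ΔE α) ∧
    (∀ α : Fin n → ℕ, MemBconvNat ΔE α →
      (fun i => (α i : ℝ)) ∈ convexHull ℝ ((fun (β : Fin n → ℕ) (i : Fin n) => (β i : ℝ)) '' ΔE)) := by
  refine ⟨fun α hα => ?_, fun α hα => hα.cast_mem_convexHull⟩
  obtain ⟨S, hS_even, rfl⟩ := hΔE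
  obtain ⟨β, hβS, hβα⟩ := hα
  have hβ_le (i : Fin n) : β i ≤ α i - α i % 2 := by
    obtain ⟨r, hr⟩ := hS_even β hβS i
    have := hβα i
    omega
  refine memBconvNat_of_midpoint (β := fun i => α i + α i % 2) (γ := fun i => α i - α i % 2)
    ⟨β, hβS, fun i => (hβ_le i).trans ((Nat.sub_le _ _).trans (Nat.le_add_right _ _))⟩
    ⟨β, hβS, hβ_le⟩ (fun i => Nat.even_iff.mpr ?_) (fun i => Nat.even_iff.mpr ?_) (fun i => ?_) <;> omega
end
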